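/- arXiv:1007.3478 — 8 statements merged into one kernel-verified Lean document; each statement's English description precedes it below -/
import Mathlib

section
/- For any m×m positive semidefinite Hermitian matrix A and any subsets I, J of {1,...,m}, det A[I∪J] · det A[I∩J] ≤ det A[I] · det A[J], where A[K] denotes the principal submatrix of A with rows and columns indexed by K, and det A[∅] := 1. -/
/-!
Write `S = I ∩ J`, `X = I \ J`, `Y = J \ I` and order the indices of `A[I ∪ J]` as `S ⊕ (X ⊕ Y)`.
If `det A[S] = 0` the left side vanishes. Otherwise `A[S]` is positive definite, and with `C` the
Schur complement of `A[S]` every minor `det A[S ∪ K]`, `K ⊆ X ∪ Y`, equals `det A[S] * det C[K]`.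
The inequality thereby becomes Fischer's inequality `det C ≤ det C[X] * det C[Y]` for the positive
semidefinite `C`, which a second Schur complement reduces to `det P ≤ det (P + W)` for `P, W ⪰ 0`;
that follows from `P = BᴴB` and `P + W = Bᴴ (1 + B⁻ᴴ W B⁻¹) B`, whose middle factor has all
eigenvalues `≥ 1`.
-/

open Matrix
open scoped ComplexOrder

/-- The principal minor of `A` on the index set `I` (determinant of the
principal submatrix of `A` with rows and columns in `I`); for `I = ∅` it is `1`. -/
noncomputable def pminor {m : ℕ} (A : Matrix (Fin m) (Fin m) ℂ) (I : Finset (Fin m)) : ℂ :=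
  (A.submatrix (fun i : I => (i : Fin m)) (fun i : I => (i : Fin m))).det

namespace Matrix

theorem det_fromBlocks_submatrix_sumMap {R l m n : Type*} [CommRing R]
    [Fintype l] [DecidableEq l] [Fintype m] [DecidableEq m]
    (A : Matrix m m R) (B : Matrix m n R) (C : Matrix n m R) (D : Matrix n n R)
    [Invertible A] (u : l → n) :
    ((fromBlocks A B C D).submatrix (Sum.map id u) (Sum.map id u)).det =
      A.det * ((D - C * ⅟A * B).submatrix u u).det := by
  have hsub : (fromBlocks A B C D).submatrix (Sum.map id u) (Sum.map id u) =
      fromBlocks A (B.submatrix id u) (C.submatrix u id) (D.submatrix u u) := by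
    ext (i | i) (j | j) <;> rfl
  rw [hsub, det_fromBlocks₁₁]
  rfl

theorem IsHermitian.exists_eq_fromBlocks {α m n : Type*} [Star α] {M : Matrix (m ⊕ n) (m ⊕ n) α}
    (hM : M.IsHermitian) : ∃ A B D, M = Matrix.fromBlocks A B Bᴴ D := by
  refine ⟨M.toBlocks₁₁, M.toBlocks₁₂, M.toBlocks₂₂, ?_⟩
  conv_lhs => rw [← fromBlocks_toBlocks M]
  congr
  ext i j
  exact (hM.apply (Sum.inr i) (Sum.inl j)).symm

namespace PosSemidef

variable {𝕜 n : Type*} [RCLike 𝕜] [Fintype n] [DecidableEq n]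

theorem one_le_det_one_add {S : Matrix n n 𝕜} (hS : S.PosSemidef) : 1 ≤ (1 + S).det := by
  have h := cfc_const_add (1 : ℝ) id S (ha := hS.1)
  rw [cfc_id ℝ S (ha := hS.1.isSelfAdjoint), map_one] at h
  rw [← h, hS.1.cfc_eq]
  simp only [IsHermitian.cfc, det_map, det_diagonal]
  refine Finset.one_le_prod fun i _ => ?_
  simpa using hS.eigenvalues_nonneg i

open scoped MatrixOrder in
theorem det_le_det_add {P W : Matrix n n 𝕜} (hP : P.PosSemidef) (hW : W.PosSemidef) :
    P.det ≤ (P + W).det := by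
  by_cases hP0 : P.det = 0
  · simpa [hP0] using (hP.add hW).det_nonneg
  obtain ⟨B, rfl⟩ := CStarAlgebra.nonneg_iff_eq_star_mul_self.mp hP.nonneg
  have hB : IsUnit B := by
    rw [isUnit_iff_isUnit_det]
    exact (right_ne_zero_of_mul (det_mul (star B) B ▸ hP0)).isUnit
  have hfactor : star B * B + W = star B * (1 + (B⁻¹)ᴴ * W * B⁻¹) * B := by
    rw [conjTranspose_nonsing_inv, ← star_eq_conjTranspose, mul_add, add_mul, mul_one,
      ← Matrix.mul_assoc, ← Matrix.mul_assoc,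
      mul_nonsing_inv _ ((isUnit_iff_isUnit_det _).1 hB.star), Matrix.one_mul, Matrix.mul_assoc,
      nonsing_inv_mul _ ((isUnit_iff_isUnit_det _).1 hB), mul_one]
  have hdet : (star B * B + W).det = (star B * B).det * (1 + (B⁻¹)ᴴ * W * B⁻¹).det := by
    rw [hfactor, det_mul, det_mul, det_mul]; ring
  rw [hdet]
  exact le_mul_of_one_le_right hP.det_nonneg (hW.conjTranspose_mul_mul_same _).one_le_det_one_add

variable {m : Type*} [Fintype m] [DecidableEq m]

theorem det_le_det_toBlocks₁₁_mul_det_toBlocks₂₂ {M : Matrix (m ⊕ n) (m ⊕ n) 𝕜}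
    (hM : M.PosSemidef) : M.det ≤ M.toBlocks₁₁.det * M.toBlocks₂₂.det := by
  obtain ⟨A, B, D, rfl⟩ := hM.1.exists_eq_fromBlocks
  rw [toBlocks_fromBlocks₁₁, toBlocks_fromBlocks₂₂]
  by_cases hA0 : A.det = 0
  · have hM0 : (fromBlocks A B Bᴴ D).det = 0 := by
      by_contra h
      exact ((hM.posDef_iff_det_ne_zero.2 h).submatrix Sum.inl_injective).det_pos.ne' hA0
    rw [hM0, hA0, zero_mul]
  have hA : A.PosDef := (hM.submatrix Sum.inl).posDef_iff_det_ne_zero.2 hA0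
  let := hA.isUnit.invertible
  have hS : (D - Bᴴ * ⅟A * B).PosSemidef := by
    rw [invOf_eq_nonsing_inv]; exact (hA.fromBlocks₁₁ B D).1 hM
  rw [det_fromBlocks₁₁]
  refine mul_le_mul_of_nonneg_left ?_ hA.det_pos.le
  simpa only [invOf_eq_nonsing_inv, sub_add_cancel] using
    hS.det_le_det_add (hA.inv.posSemidef.conjTranspose_mul_mul_same B)

variable {l : Type*} [Fintype l] [DecidableEq l]

theorem det_mul_det_toBlocks₁₁_le {M : Matrix (l ⊕ (m ⊕ n)) (l ⊕ (m ⊕ n)) 𝕜}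
    (hM : M.PosSemidef) :
    M.det * M.toBlocks₁₁.det ≤
      (M.submatrix (Sum.map id Sum.inl) (Sum.map id Sum.inl)).det *
        (M.submatrix (Sum.map id Sum.inr) (Sum.map id Sum.inr)).det := by
  obtain ⟨A, B, D, rfl⟩ := hM.1.exists_eq_fromBlocks
  rw [toBlocks_fromBlocks₁₁]
  by_cases hA0 : A.det = 0
  · rw [hA0, mul_zero]
    exact mul_nonneg (hM.submatrix _).det_nonneg (hM.submatrix _).det_nonneg
  have hA : A.PosDef := (hM.submatrix Sum.inl).posDef_iff_det_ne_zero.2 hA0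
  let := hA.isUnit.invertible
  have hS : (D - Bᴴ * ⅟A * B).PosSemidef := by
    rw [invOf_eq_nonsing_inv]; exact (hA.fromBlocks₁₁ B D).1 hM
  rw [det_fromBlocks₁₁, det_fromBlocks_submatrix_sumMap, det_fromBlocks_submatrix_sumMap]
  set S := D - Bᴴ * ⅟A * B
  have hFischer : S.det ≤ (S.submatrix Sum.inl Sum.inl).det * (S.submatrix Sum.inr Sum.inr).det :=
    hS.det_le_det_toBlocks₁₁_mul_det_toBlocks₂₂
  calc A.det * S.det * A.det = A.det * A.det * S.det := by ring
    _ ≤ A.det * A.det * ((S.submatrix Sum.inl Sum.inl).det * (S.submatrix Sum.inr Sum.inr).det) :=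
        mul_le_mul_of_nonneg_left hFischer (mul_nonneg hA.det_pos.le hA.det_pos.le)
    _ = _ := by ring

end PosSemidef

end Matrix

theorem pminor_eq_det_submatrix {m : ℕ} {κ : Type*} [Fintype κ] [DecidableEq κ]
    (A : Matrix (Fin m) (Fin m) ℂ) {K : Finset (Fin m)} {u : κ → Fin m}
    (hu : Function.Injective u) (hK : Set.range u = K) : pminor A K = (A.submatrix u u).det := by
  let e : κ ≃ K := (Equiv.ofInjective u hu).trans (Equiv.setCongr hK)
  rw [pminor, ← det_submatrix_equiv_self e]
  rfl

/-- Multiplicative submodularity (Hadamard–Fischer/Kotelyanskiĭ) of principal minors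
of a positive semidefinite Hermitian matrix. -/
theorem det_principal_submodular {m : ℕ} (A : Matrix (Fin m) (Fin m) ℂ)
    (hA : A.PosSemidef) (I J : Finset (Fin m)) :
    pminor A (I ∪ J) * pminor A (I ∩ J) ≤ pminor A I * pminor A J := by
  classical
  let u : ↥(I ∩ J) ⊕ (↥(I \ J) ⊕ ↥(J \ I)) → Fin m := Sum.elim (↑) (Sum.elim (↑) (↑))
  have hu : Function.Injective u := by
    refine Subtype.val_injective.sumElim
      (Subtype.val_injective.sumElim Subtype.val_injective ?_) ?_
    · rintro ⟨a, ha⟩ ⟨b, hb⟩ rfl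
      simp only [Finset.mem_sdiff] at ha hb
      tauto
    · rintro ⟨a, ha⟩ (⟨b, hb⟩ | ⟨b, hb⟩) rfl <;>
        simp only [Finset.mem_sdiff, Finset.mem_inter] at ha hb <;> tauto
  have hunion : pminor A (I ∪ J) = (A.submatrix u u).det := by
    refine pminor_eq_det_submatrix A hu ?_
    ext x; by_cases x ∈ I <;> by_cases x ∈ J <;> simp [u, *]
  have hI : pminor A I =
      ((A.submatrix u u).submatrix (Sum.map id Sum.inl) (Sum.map id Sum.inl)).det := by
    refine pminor_eq_det_submatrix A (hu.comp (Function.injective_id.sumMap Sum.inl_injective)) ?_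
    ext x; by_cases x ∈ I <;> by_cases x ∈ J <;> simp [u, *]
  have hJ : pminor A J =
      ((A.submatrix u u).submatrix (Sum.map id Sum.inr) (Sum.map id Sum.inr)).det := by
    refine pminor_eq_det_submatrix A (hu.comp (Function.injective_id.sumMap Sum.inr_injective)) ?_
    ext x; by_cases x ∈ I <;> by_cases x ∈ J <;> simp [u, *]
  rw [hunion, hI, hJ]
  -- `pminor A (I ∩ J)` is `(A.submatrix u u).toBlocks₁₁.det` up to unfolding
  exact (hA.submatrix u).det_mul_det_toBlocks₁₁_le
end

section
/- Let A be an m×m positive semidefinite Hermitian matrix. Then for all subsets I, J of {1,...,m}: tr(A[I] log A[I]) + tr(A[J] log A[J]) ≤ tr(A[I∪J] log A[I∪J]) + tr(A[I∩J] log A[I∩J]), where for a positive semidefinite matrix B with eigenvalues λᵢ, tr(B log B) := Σᵢ λᵢ log λᵢ with the convention 0 log 0 = 0. -/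
open Matrix
open scoped ComplexOrder

/-- The principal submatrix of `A` with rows and columns in `I`. -/
def psub {m : ℕ} (A : Matrix (Fin m) (Fin m) ℂ) (I : Finset (Fin m)) :
    Matrix I I ℂ :=
  A.submatrix (fun i : I => (i : Fin m)) (fun i : I => (i : Fin m))

/-- `trF f M = tr f(M)` for a Hermitian matrix `M`: the sum of `f` applied to the
eigenvalues of `M` (junk value `0` if `M` is not Hermitian). -/
noncomputable def trF {n : Type*} [Fintype n] [DecidableEq n]
    (f : ℝ → ℝ) (M : Matrix n n ℂ) : ℝ :=
  if h : M.IsHermitian then ∑ i, f (h.eigenvalues i) else 0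

/-!
Write `A = Bᴴ B`. Then `A[K] = B_Kᴴ B_K` has the same nonzero eigenvalues as
`B_K B_Kᴴ = ∑_{k ∈ K} b_k b_kᴴ`, so (as `0 log 0 = 0`) it suffices to show that
`K ↦ tr φ(∑_{k ∈ K} b_k b_kᴴ)` is supermodular, `φ x = x log x`; that is, the increment
`tr φ(X + v vᴴ) - tr φ(X)` grows with `X` in the Loewner order. By
`x log x - x + 1 = ∫₀^∞ ((x - 1) / (1 + s) + log (1 + s) - log (x + s)) ds`, the only
nonlinear part of `tr φ(X)` is `-∫₀^∞ log det (X + s) ds`, and by the matrix determinant lemma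
`log det (X + s + v vᴴ) - log det (X + s) = log (1 + vᴴ (X + s)⁻¹ v)`, which decreases in `X`
because matrix inversion is operator antitone.
-/

open Real MeasureTheory Set Filter Polynomial
open scoped Topology

section Supermodular

variable {κ β : Type*} [DecidableEq κ] [AddCommMonoid β] [PartialOrder β]
  [IsOrderedCancelAddMonoid β]

theorem add_le_union_add_inter_of_increment_mono {F : Finset κ → β}
    (hF : ∀ K L a, K ⊆ L → a ∉ L → F (insert a K) + F L ≤ F (insert a L) + F K)
    (I J : Finset κ) : F I + F J ≤ F (I ∪ J) + F (I ∩ J) := by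
  have key : ∀ D : Finset κ, Disjoint J D → F (I ∩ J ∪ D) + F J ≤ F (J ∪ D) + F (I ∩ J) := by
    intro D
    induction D using Finset.induction_on with
    | empty => intro _; simp [add_comm]
    | insert a D ha ih =>
      intro hJ
      rw [Finset.disjoint_insert_right] at hJ
      have step := hF (I ∩ J ∪ D) (J ∪ D) a
        (Finset.union_subset_union Finset.inter_subset_right subset_rfl) (by simp [hJ.1, ha])
      rw [Finset.union_insert, Finset.union_insert]
      refine le_of_add_le_add_right (a := F (J ∪ D) + F (I ∩ J ∪ D)) ?_
      convert add_le_add step (ih hJ.2) using 1 <;> abel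
  have hI : I ∩ J ∪ I \ J = I := by rw [Finset.union_comm, Finset.sdiff_union_inter]
  simpa [hI, Finset.union_sdiff_self_eq_union, Finset.union_comm J I] using
    key (I \ J) Finset.disjoint_sdiff

end Supermodular

section MulLogIntegral

noncomputable def mulLogKernel (c s : ℝ) : ℝ := (c - 1) / (1 + s) + log (1 + s) - log (c + s)

noncomputable def mulLogKernelPrimitive (c s : ℝ) : ℝ :=
  (c + s) * log (1 + s) - (c + s) * log (c + s)

variable {c : ℝ}

lemma mulLogKernel_nonneg (hc : 0 ≤ c) {s : ℝ} (hs : 0 < s) : 0 ≤ mulLogKernel c s := by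
  have h1 : 0 < 1 + s := by linarith
  have h2 : 0 < c + s := by linarith
  have key := log_le_sub_one_of_pos (div_pos h2 h1)
  rw [log_div h2.ne' h1.ne', div_sub_one h1.ne', show c + s - (1 + s) = c - 1 by ring] at key
  unfold mulLogKernel
  linarith

lemma hasDerivAt_mulLogKernelPrimitive (hc : 0 ≤ c) {s : ℝ} (hs : 0 < s) :
    HasDerivAt (mulLogKernelPrimitive c) (mulLogKernel c s) s := by
  have h1 : 1 + s ≠ 0 := by positivity
  have h2 : c + s ≠ 0 := by positivity
  have d1 : HasDerivAt (fun s => 1 + s) 1 s := (hasDerivAt_id s).const_add 1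
  have d2 : HasDerivAt (fun s => c + s) 1 s := (hasDerivAt_id s).const_add c
  refine ((d2.mul (d1.log h1)).sub (d2.mul (d2.log h2))).congr_deriv ?_
  unfold mulLogKernel
  field_simp
  ring

lemma continuousWithinAt_mulLogKernelPrimitive :
    ContinuousWithinAt (mulLogKernelPrimitive c) (Ici 0) 0 := by
  have hlog : ContinuousAt (fun s : ℝ => log (1 + s)) 0 :=
    (continuousAt_log (by norm_num)).comp (by fun_prop)
  have hmulLog : Continuous fun s : ℝ => (c + s) * log (c + s) :=
    continuous_mul_log.comp (continuous_const_add c)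
  exact (((continuous_const_add c).continuousAt.mul hlog).sub
    hmulLog.continuousAt).continuousWithinAt

lemma tendsto_mulLogKernelPrimitive_atTop :
    Tendsto (mulLogKernelPrimitive c) atTop (𝓝 (1 - c)) := by
  have hlog : Tendsto (fun t : ℝ => log (1 + (c - 1) / t)) atTop (𝓝 0) := by
    have := (tendsto_mul_log_one_add_div_atTop (c - 1)).mul tendsto_inv_atTop_zero
    rw [mul_zero] at this
    refine this.congr' ?_
    filter_upwards [eventually_gt_atTop 0] with t ht
    field_simp
  have hlim : Tendsto (fun t : ℝ => -((t + (c - 1)) * log (1 + (c - 1) / t)))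
      atTop (𝓝 (1 - c)) := by
    convert ((tendsto_mul_log_one_add_div_atTop (c - 1)).add (hlog.const_mul (c - 1))).neg
      using 2 <;> ring
  -- for `s > -c`, the primitive is `-(t + (c - 1)) log (1 + (c - 1) / t)` at `t = 1 + s`
  refine (hlim.comp (tendsto_atTop_add_const_left atTop 1 tendsto_id)).congr' ?_
  filter_upwards [eventually_gt_atTop (max 0 (-c))] with s hs
  have h1 : 0 < 1 + s := by linarith [le_max_left 0 (-c)]
  have h2 : 0 < c + s := by linarith [le_max_right 0 (-c)]
  have : 1 + (c - 1) / (1 + s) = (c + s) / (1 + s) := by field_simp; ring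
  simp only [Function.comp_apply, id, mulLogKernelPrimitive, this, log_div h2.ne' h1.ne']
  ring

lemma integrableOn_mulLogKernel (hc : 0 ≤ c) : IntegrableOn (mulLogKernel c) (Ioi 0) :=
  integrableOn_Ioi_deriv_of_nonneg continuousWithinAt_mulLogKernelPrimitive
    (fun _ hs => hasDerivAt_mulLogKernelPrimitive hc hs) (fun _ hs => mulLogKernel_nonneg hc hs)
    tendsto_mulLogKernelPrimitive_atTop

lemma integral_mulLogKernel (hc : 0 ≤ c) :
    ∫ s in Ioi 0, mulLogKernel c s = c * log c - c + 1 := by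
  rw [integral_Ioi_of_hasDerivAt_of_tendsto continuousWithinAt_mulLogKernelPrimitive
    (fun _ hs => hasDerivAt_mulLogKernelPrimitive hc hs) (integrableOn_mulLogKernel hc)
    tendsto_mulLogKernelPrimitive_atTop]
  simp only [mulLogKernelPrimitive, add_zero, log_one, mul_zero]
  ring

end MulLogIntegral

section TraceFunction

variable {n : Type*} [Fintype n] [DecidableEq n]

lemma trF_eq_sum_eigenvalues {X : Matrix n n ℂ} (hX : X.IsHermitian) (f : ℝ → ℝ) :
    trF f X = ∑ i, f (hX.eigenvalues i) :=
  dif_pos hX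

lemma trF_eq_sum_roots_charpoly {X : Matrix n n ℂ} (hX : X.IsHermitian) (f : ℝ → ℝ) :
    trF f X = (X.charpoly.roots.map fun z => f z.re).sum := by
  rw [trF_eq_sum_eigenvalues hX, hX.roots_charpoly_eq_eigenvalues, Multiset.map_map]
  simp [Function.comp_def]

lemma trF_id_eq_re_trace {X : Matrix n n ℂ} (hX : X.IsHermitian) : trF id X = X.trace.re := by
  simp [trF_eq_sum_eigenvalues hX, hX.trace_eq_sum_eigenvalues]

lemma trF_id_add {X Y : Matrix n n ℂ} (hX : X.IsHermitian) (hY : Y.IsHermitian) :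
    trF id (X + Y) = trF id X + trF id Y := by
  rw [trF_id_eq_re_trace (hX.add hY), trF_id_eq_re_trace hX, trF_id_eq_re_trace hY, trace_add,
    Complex.add_re]

lemma sum_map_roots_X_pow_mul {R M : Type*} [CommRing R] [IsDomain R] [AddCommMonoid M]
    {f : R → M} (hf : f 0 = 0) (k : ℕ) {p : R[X]} (hp : p ≠ 0) :
    (((X : R[X]) ^ k * p).roots.map f).sum = (p.roots.map f).sum := by
  rw [roots_mul (mul_ne_zero (pow_ne_zero _ X_ne_zero) hp), roots_X_pow, Multiset.map_add,
    Multiset.sum_add, Multiset.map_nsmul, Multiset.sum_nsmul]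
  simp [hf]

/-- `Y Yᴴ` and `Yᴴ Y` have the same nonzero eigenvalues. -/
lemma trF_mul_conjTranspose_comm {κ : Type*} [Fintype κ] [DecidableEq κ] {f : ℝ → ℝ}
    (hf : f 0 = 0) (Y : Matrix n κ ℂ) : trF f (Y * Yᴴ) = trF f (Yᴴ * Y) := by
  have hroots := congrArg (fun p : ℂ[X] => (p.roots.map fun z => f z.re).sum)
    (charpoly_mul_comm' Y Yᴴ)
  simp only [sum_map_roots_X_pow_mul (f := fun z : ℂ => f z.re) (by simpa using hf) _
    (charpoly_monic _).ne_zero] at hroots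
  rw [trF_eq_sum_roots_charpoly (isHermitian_mul_conjTranspose_self Y),
    trF_eq_sum_roots_charpoly (isHermitian_conjTranspose_mul_self Y), hroots]

end TraceFunction

lemma Matrix.PosSemidef.posDef_add_smul_one {n : Type*} [DecidableEq n] {X : Matrix n n ℂ}
    (hX : X.PosSemidef) {s : ℝ} (hs : 0 < s) : (X + (s : ℂ) • 1).PosDef :=
  PosDef.posSemidef_add hX (PosDef.one.smul (by exact_mod_cast hs))

section RankOneUpdate

variable {n : Type*} [Fintype n] [DecidableEq n]

lemma det_add_smul_one_eq_prod_eigenvalues {X : Matrix n n ℂ} (hX : X.IsHermitian) (s : ℝ) :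
    (X + (s : ℂ) • 1).det = ((∏ i, (hX.eigenvalues i + s) : ℝ) : ℂ) := by
  have h := X.eval_charpoly (-s)
  have hneg : scalar n (-(s : ℂ)) - X = -(X + (s : ℂ) • 1) := by
    rw [scalar_apply, ← smul_one_eq_diagonal, neg_smul]
    abel
  rw [hX.charpoly_eq, eval_prod, hneg, det_neg] at h
  simp only [eval_sub, eval_X, eval_C, ← neg_add', Finset.prod_neg, Finset.card_univ] at h
  push_cast
  simpa [add_comm] using (mul_left_cancel₀ (pow_ne_zero _ (neg_ne_zero.mpr one_ne_zero)) h).symm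

lemma det_add_vecMulVec {R : Type*} [CommRing R] {A : Matrix n n R} (hA : IsUnit A.det)
    (u w : n → R) : (A + vecMulVec u w).det = A.det * (1 + w ⬝ᵥ A⁻¹ *ᵥ u) := by
  rw [vecMulVec_eq Unit, det_add_replicateCol_mul_replicateRow hA, Matrix.mul_assoc,
    ← replicateCol_mulVec]
  congr 1
  rw [det_unique]
  rfl

open scoped MatrixOrder Matrix.Norms.L2Operator in
lemma star_dotProduct_inv_mulVec_le {A B : Matrix n n ℂ} (hA : A.PosDef)
    (hAB : (B - A).PosSemidef) (v : n → ℂ) : star v ⬝ᵥ B⁻¹ *ᵥ v ≤ star v ⬝ᵥ A⁻¹ *ᵥ v := by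
  have hB : B.PosDef := by simpa using hA.add_posSemidef hAB
  have hinv : B⁻¹ ≤ A⁻¹ := by
    lift A to (Matrix n n ℂ)ˣ using hA.isUnit
    lift B to (Matrix n n ℂ)ˣ using hB.isUnit
    rw [← coe_units_inv, ← coe_units_inv]
    exact CStarAlgebra.inv_le_inv hA.posSemidef.nonneg hAB
  rw [← sub_nonneg, ← dotProduct_sub, ← sub_mulVec]
  exact (le_iff.mp hinv).dotProduct_mulVec_nonneg v

lemma trF_log_add_eq_log_det {X : Matrix n n ℂ} (hX : X.PosSemidef) {s : ℝ} (hs : 0 < s) :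
    trF (fun x => log (x + s)) X = log (X + (s : ℂ) • 1).det.re := by
  rw [trF_eq_sum_eigenvalues hX.1, det_add_smul_one_eq_prod_eigenvalues hX.1, Complex.ofReal_re,
    log_prod fun i _ => (add_pos_of_nonneg_of_pos (hX.eigenvalues_nonneg i) hs).ne']

lemma trF_log_add_vecMulVec {X : Matrix n n ℂ} (hX : X.PosSemidef) {s : ℝ} (hs : 0 < s)
    (v : n → ℂ) :
    trF (fun x => log (x + s)) (X + vecMulVec v (star v)) =
      trF (fun x => log (x + s)) X + log (1 + (star v ⬝ᵥ (X + (s : ℂ) • 1)⁻¹ *ᵥ v).re) := by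
  have hXs := hX.posDef_add_smul_one hs
  obtain ⟨hdet, hdet_im⟩ := Complex.pos_iff.mp hXs.det_pos
  have hq := hXs.inv.posSemidef.dotProduct_mulVec_nonneg v
  rw [trF_log_add_eq_log_det (hX.add (posSemidef_vecMulVec_self_star v)) hs,
    trF_log_add_eq_log_det hX hs, add_right_comm,
    det_add_vecMulVec (isUnit_iff_ne_zero.mpr hXs.det_pos.ne'), Complex.mul_re, ← hdet_im,
    zero_mul, sub_zero, Complex.add_re, Complex.one_re,
    log_mul hdet.ne' (by linarith [(Complex.nonneg_iff.mp hq).1])]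

lemma trF_log_add_vecMulVec_sub_le {M N : Matrix n n ℂ} (hM : M.PosSemidef)
    (hMN : (N - M).PosSemidef) {s : ℝ} (hs : 0 < s) (v : n → ℂ) :
    trF (fun x => log (x + s)) (N + vecMulVec v (star v)) - trF (fun x => log (x + s)) N ≤
      trF (fun x => log (x + s)) (M + vecMulVec v (star v)) - trF (fun x => log (x + s)) M := by
  have hN : N.PosSemidef := by simpa using hM.add hMN
  rw [trF_log_add_vecMulVec hN hs, trF_log_add_vecMulVec hM hs, add_sub_cancel_left,
    add_sub_cancel_left]
  have hq := star_dotProduct_inv_mulVec_le (hM.posDef_add_smul_one hs)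
    (by rwa [add_sub_add_right_eq_sub]) v
  have hqN := (hN.posDef_add_smul_one hs).inv.posSemidef.dotProduct_mulVec_nonneg v
  exact log_le_log (by linarith [(Complex.nonneg_iff.mp hqN).1])
    (by linarith [(Complex.le_def.mp hq).1])

end RankOneUpdate

section MulLogTrace

variable {n : Type*} [Fintype n] [DecidableEq n]

lemma trF_mulLogKernel {X : Matrix n n ℂ} (hX : X.IsHermitian) (s : ℝ) :
    trF (fun x => mulLogKernel x s) X = (trF id X - Fintype.card n) / (1 + s) +
      Fintype.card n * log (1 + s) - trF (fun x => log (x + s)) X := by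
  simp only [trF_eq_sum_eigenvalues hX, mulLogKernel, Finset.sum_sub_distrib,
    Finset.sum_add_distrib, ← Finset.sum_div, Finset.sum_const, Finset.card_univ, nsmul_eq_mul, id]
  ring

lemma integrableOn_trF_mulLogKernel {X : Matrix n n ℂ} (hX : X.PosSemidef) :
    IntegrableOn (fun s => trF (fun x => mulLogKernel x s) X) (Ioi 0) := by
  simp only [trF_eq_sum_eigenvalues hX.1]
  exact integrable_finsetSum _ fun i _ => integrableOn_mulLogKernel (hX.eigenvalues_nonneg i)

lemma trF_mul_log_eq_integral {X : Matrix n n ℂ} (hX : X.PosSemidef) :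
    trF (fun x => x * log x) X =
      (∫ s in Ioi 0, trF (fun x => mulLogKernel x s) X) + trF id X - Fintype.card n := by
  simp only [trF_eq_sum_eigenvalues hX.1]
  rw [integral_finsetSum _ fun i _ => integrableOn_mulLogKernel (hX.eigenvalues_nonneg i)]
  simp only [integral_mulLogKernel (hX.eigenvalues_nonneg _), Finset.sum_add_distrib,
    Finset.sum_sub_distrib, Finset.sum_const, Finset.card_univ, nsmul_eq_mul, id]
  ring

lemma trF_mulLogKernel_add_vecMulVec_le {M N : Matrix n n ℂ} (hM : M.PosSemidef)
    (hMN : (N - M).PosSemidef) {s : ℝ} (hs : 0 < s) (v : n → ℂ) :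
    trF (fun x => mulLogKernel x s) (M + vecMulVec v (star v)) +
        trF (fun x => mulLogKernel x s) N ≤
      trF (fun x => mulLogKernel x s) (N + vecMulVec v (star v)) +
        trF (fun x => mulLogKernel x s) M := by
  have hN : N.PosSemidef := by simpa using hM.add hMN
  have hP := posSemidef_vecMulVec_self_star v
  have hlog := trF_log_add_vecMulVec_sub_le hM hMN hs v
  rw [trF_mulLogKernel (hM.add hP).1, trF_mulLogKernel hN.1, trF_mulLogKernel (hN.add hP).1,
    trF_mulLogKernel hM.1]
  have hlinear : (trF id (M + vecMulVec v (star v)) - Fintype.card n) / (1 + s) +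
      (trF id N - Fintype.card n) / (1 + s) =
      (trF id (N + vecMulVec v (star v)) - Fintype.card n) / (1 + s) +
      (trF id M - Fintype.card n) / (1 + s) := by
    rw [← add_div, ← add_div, trF_id_add hM.1 hP.1, trF_id_add hN.1 hP.1]
    ring
  linarith

theorem trF_mul_log_add_vecMulVec_le {M N : Matrix n n ℂ} (hM : M.PosSemidef)
    (hMN : (N - M).PosSemidef) (v : n → ℂ) :
    trF (fun x => x * log x) (M + vecMulVec v (star v)) + trF (fun x => x * log x) N ≤
      trF (fun x => x * log x) (N + vecMulVec v (star v)) + trF (fun x => x * log x) M := by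
  have hN : N.PosSemidef := by simpa using hM.add hMN
  have hP := posSemidef_vecMulVec_self_star v
  have htraceM := trF_id_add hM.1 hP.1
  have htraceN := trF_id_add hN.1 hP.1
  have hint :
      (∫ s in Ioi 0, trF (fun x => mulLogKernel x s) (M + vecMulVec v (star v))) +
          ∫ s in Ioi 0, trF (fun x => mulLogKernel x s) N ≤
        (∫ s in Ioi 0, trF (fun x => mulLogKernel x s) (N + vecMulVec v (star v))) +
          ∫ s in Ioi 0, trF (fun x => mulLogKernel x s) M := by
    have hMP := integrableOn_trF_mulLogKernel (hM.add hP)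
    have hNP := integrableOn_trF_mulLogKernel (hN.add hP)
    rw [← integral_add hMP (integrableOn_trF_mulLogKernel hN),
      ← integral_add hNP (integrableOn_trF_mulLogKernel hM)]
    exact setIntegral_mono_on (hMP.add (integrableOn_trF_mulLogKernel hN))
      (hNP.add (integrableOn_trF_mulLogKernel hM)) measurableSet_Ioi
      fun s hs => trF_mulLogKernel_add_vecMulVec_le hM hMN hs v
  rw [trF_mul_log_eq_integral (hM.add hP), trF_mul_log_eq_integral hN,
    trF_mul_log_eq_integral (hN.add hP), trF_mul_log_eq_integral hM]
  linarith

end MulLogTrace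

section Gram

open scoped MatrixOrder Matrix.Norms.L2Operator in
lemma Matrix.PosSemidef.exists_eq_conjTranspose_mul_self {n : Type*} [Fintype n] [DecidableEq n]
    {A : Matrix n n ℂ} (hA : A.PosSemidef) : ∃ B : Matrix n n ℂ, A = Bᴴ * B :=
  CStarAlgebra.nonneg_iff_eq_star_mul_self.mp hA.nonneg

lemma mul_conjTranspose_eq_sum_vecMulVec {n κ α : Type*} [Fintype κ] [Semiring α] [StarRing α]
    (Y : Matrix n κ α) : Y * Yᴴ = ∑ k, vecMulVec (Y.col k) (star (Y.col k)) := by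
  ext i j
  simp [mul_apply, Matrix.sum_apply, vecMulVec_apply]

variable {n : Type*} [Fintype n] {m : ℕ}

lemma psub_conjTranspose_mul_self (B : Matrix n (Fin m) ℂ) (K : Finset (Fin m)) :
    psub (Bᴴ * B) K = (B.submatrix id ((↑) : K → Fin m))ᴴ * B.submatrix id (↑) := by
  rw [psub, submatrix_mul _ _ _ id _ Function.bijective_id, conjTranspose_submatrix]

variable [DecidableEq n]

lemma trF_psub_conjTranspose_mul_self {f : ℝ → ℝ} (hf : f 0 = 0) (B : Matrix n (Fin m) ℂ)
    (K : Finset (Fin m)) :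
    trF f (psub (Bᴴ * B) K) = trF f (∑ k ∈ K, vecMulVec (B.col k) (star (B.col k))) := by
  rw [psub_conjTranspose_mul_self, ← trF_mul_conjTranspose_comm hf,
    mul_conjTranspose_eq_sum_vecMulVec]
  exact congrArg (trF f) (Finset.sum_coe_sort K fun k => vecMulVec (B.col k) (star (B.col k)))

lemma trF_mul_log_sum_vecMulVec_increment_mono {κ : Type*} [DecidableEq κ] (v : κ → n → ℂ)
    {K L : Finset κ} {a : κ} (hKL : K ⊆ L) (ha : a ∉ L) :
    trF (fun x => x * log x) (∑ k ∈ insert a K, vecMulVec (v k) (star (v k))) +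
        trF (fun x => x * log x) (∑ k ∈ L, vecMulVec (v k) (star (v k))) ≤
      trF (fun x => x * log x) (∑ k ∈ insert a L, vecMulVec (v k) (star (v k))) +
        trF (fun x => x * log x) (∑ k ∈ K, vecMulVec (v k) (star (v k))) := by
  have hsum : ∀ S : Finset κ, (∑ k ∈ S, vecMulVec (v k) (star (v k))).PosSemidef := fun S =>
    posSemidef_sum S fun k _ => posSemidef_vecMulVec_self_star (v k)
  rw [Finset.sum_insert (fun h => ha (hKL h)), Finset.sum_insert ha, add_comm (vecMulVec _ _),
    add_comm (vecMulVec _ _)]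
  refine trF_mul_log_add_vecMulVec_le (hsum K) ?_ (v a)
  rw [← Finset.sum_sdiff hKL, add_sub_cancel_right]
  exact hsum _

end Gram

/-- `Real.log 0 = 0` gives the convention `0 log 0 = 0`. -/
theorem trace_xlogx_principal_supermodular {m : ℕ} (A : Matrix (Fin m) (Fin m) ℂ)
    (hA : A.PosSemidef) (I J : Finset (Fin m)) :
    trF (fun x => x * Real.log x) (psub A I) + trF (fun x => x * Real.log x) (psub A J) ≤
      trF (fun x => x * Real.log x) (psub A (I ∪ J)) +
        trF (fun x => x * Real.log x) (psub A (I ∩ J)) := by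
  obtain ⟨B, rfl⟩ := hA.exists_eq_conjTranspose_mul_self
  simp only [trF_psub_conjTranspose_mul_self (f := fun x => x * log x) (by simp) B]
  exact add_le_union_add_inter_of_increment_mono
    (F := fun K => trF (fun x => x * log x) (∑ k ∈ K, vecMulVec (B.col k) (star (B.col k))))
    (fun _ _ _ hKL ha => trF_mul_log_sum_vecMulVec_increment_mono B.col hKL ha) I J
end

section
/- For any m×m Hermitian matrix A: tr(A[I]²) + tr(A[J]²) ≤ tr(A[I∪J]²) + tr(A[I∩J]²) for all subsets I, J of {1,...,m}, with equality if and only if the submatrix A[I∖J, J∖I] of entries with row indices in I∖J and column indices in J∖I is zero; more precisely, the difference of the right side minus the left side equals 2·tr(A[I∖J, J∖I] · A[I∖J, J∖I]*). -/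
open Matrix
open scoped ComplexOrder

/-- The (generally rectangular) submatrix of `A` with rows in `S` and columns in `T`. -/
def offsub {m : ℕ} (A : Matrix (Fin m) (Fin m) ℂ) (S T : Finset (Fin m)) :
    Matrix S T ℂ :=
  A.submatrix (fun i : S => (i : Fin m)) (fun j : T => (j : Fin m))

private lemma trace_psub_sq {m : ℕ} (A : Matrix (Fin m) (Fin m) ℂ) (K : Finset (Fin m)) :
    Matrix.trace ((psub A K) ^ 2) = ∑ i ∈ K, ∑ j ∈ K, A i j * A j i := by
  rw [sq, Matrix.trace, ← Finset.sum_coe_sort K]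
  congr 1; ext i
  rw [Matrix.diag_apply, Matrix.mul_apply, ← Finset.sum_coe_sort K]
  rfl

private lemma sum_split {m : ℕ} (g : Fin m → Fin m → ℂ) {X Y : Finset (Fin m)}
    (h : Disjoint X Y) (Z : Finset (Fin m)) :
    ∑ i ∈ (X ∪ Y), ∑ j ∈ Z, g i j = (∑ i ∈ X, ∑ j ∈ Z, g i j) + ∑ i ∈ Y, ∑ j ∈ Z, g i j :=
  Finset.sum_union h

private lemma sum_split' {m : ℕ} (g : Fin m → Fin m → ℂ) (X : Finset (Fin m)) {Y Z : Finset (Fin m)}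
    (h : Disjoint Y Z) :
    ∑ i ∈ X, ∑ j ∈ (Y ∪ Z), g i j = (∑ i ∈ X, ∑ j ∈ Y, g i j) + ∑ i ∈ X, ∑ j ∈ Z, g i j := by
  simp [Finset.sum_union h, Finset.sum_add_distrib]

private lemma sum_swap' {m : ℕ} (A : Matrix (Fin m) (Fin m) ℂ) (X Y : Finset (Fin m)) :
    ∑ i ∈ X, ∑ j ∈ Y, A i j * A j i = ∑ i ∈ Y, ∑ j ∈ X, A i j * A j i := by
  rw [Finset.sum_comm]
  exact Finset.sum_congr rfl fun i _ => Finset.sum_congr rfl fun j _ => mul_comm _ _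

private lemma trace_off {m : ℕ} (A : Matrix (Fin m) (Fin m) ℂ) (hA : A.IsHermitian)
    (P Q : Finset (Fin m)) :
    Matrix.trace (offsub A P Q * (offsub A P Q)ᴴ) = ∑ i ∈ P, ∑ j ∈ Q, A i j * A j i := by
  rw [Matrix.trace, ← Finset.sum_coe_sort P]
  refine Finset.sum_congr rfl fun i _ => ?_
  rw [Matrix.diag_apply, Matrix.mul_apply, ← Finset.sum_coe_sort Q]
  refine Finset.sum_congr rfl fun j _ => ?_
  have := hA.apply (j : Fin m) (i : Fin m)
  simp only [offsub, Matrix.conjTranspose_apply, Matrix.submatrix_apply]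
  rw [← this]

/-- For any Hermitian `A`, the set function `I ↦ tr (A[I]²)` is supermodular;
the defect is exactly `2 tr (A[I∖J, J∖I] A[I∖J, J∖I]^*)`, and equality holds iff
the block `A[I∖J, J∖I]` vanishes. -/
theorem trace_sq_principal_supermodular {m : ℕ} (A : Matrix (Fin m) (Fin m) ℂ)
    (hA : A.IsHermitian) (I J : Finset (Fin m)) :
    (Matrix.trace ((psub A I) ^ 2) + Matrix.trace ((psub A J) ^ 2) ≤
        Matrix.trace ((psub A (I ∪ J)) ^ 2) + Matrix.trace ((psub A (I ∩ J)) ^ 2)) ∧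
    (Matrix.trace ((psub A (I ∪ J)) ^ 2) + Matrix.trace ((psub A (I ∩ J)) ^ 2) -
          Matrix.trace ((psub A I) ^ 2) - Matrix.trace ((psub A J) ^ 2) =
        2 * Matrix.trace (offsub A (I \ J) (J \ I) * (offsub A (I \ J) (J \ I))ᴴ)) ∧
    (Matrix.trace ((psub A I) ^ 2) + Matrix.trace ((psub A J) ^ 2) =
        Matrix.trace ((psub A (I ∪ J)) ^ 2) + Matrix.trace ((psub A (I ∩ J)) ^ 2) ↔
      offsub A (I \ J) (J \ I) = 0) := by
  set P := I \ J with hP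
  set Q := J \ I with hQ
  set R := I ∩ J with hR
  have hPR : Disjoint P R := by
    simp only [hP, hR]
    exact Finset.disjoint_left.2 fun x hx hx2 => (Finset.mem_sdiff.1 hx).2 (Finset.mem_inter.1 hx2).2
  have hQR : Disjoint Q R := by
    simp only [hQ, hR]
    exact Finset.disjoint_left.2 fun x hx hx2 => (Finset.mem_sdiff.1 hx).2 (Finset.mem_inter.1 hx2).1
  have hPQ : Disjoint P Q := by
    simp only [hP, hQ]
    exact Finset.disjoint_left.2 fun x hx hx2 => (Finset.mem_sdiff.1 hx2).2 (Finset.mem_sdiff.1 hx).1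
  have hPQR : Disjoint P (Q ∪ R) := Finset.disjoint_union_right.2 ⟨hPQ, hPR⟩
  have hI : I = P ∪ R := by
    ext x; simp only [hP, hR, Finset.mem_union, Finset.mem_sdiff, Finset.mem_inter]; tauto
  have hJ : J = Q ∪ R := by
    ext x; simp only [hQ, hR, Finset.mem_union, Finset.mem_sdiff, Finset.mem_inter]; tauto
  have hU : I ∪ J = P ∪ (Q ∪ R) := by
    ext x
    simp only [hP, hQ, hR, Finset.mem_union, Finset.mem_sdiff, Finset.mem_inter]
    tauto
  -- key identity
  have hQP : ∑ i ∈ Q, ∑ j ∈ P, A i j * A j i = ∑ i ∈ P, ∑ j ∈ Q, A i j * A j i :=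
    sum_swap' A Q P
  have key : Matrix.trace ((psub A (I ∪ J)) ^ 2) + Matrix.trace ((psub A (I ∩ J)) ^ 2) -
      Matrix.trace ((psub A I) ^ 2) - Matrix.trace ((psub A J) ^ 2) =
      2 * ∑ i ∈ P, ∑ j ∈ Q, A i j * A j i := by
    rw [trace_psub_sq, trace_psub_sq, trace_psub_sq, trace_psub_sq, ← hR, hU, hI, hJ]
    simp only [Finset.sum_union hPQR, Finset.sum_union hPR, Finset.sum_union hQR,
      Finset.sum_union hPQ, Finset.sum_add_distrib]
    rw [hQP]
    ring
  have hT : Matrix.trace (offsub A P Q * (offsub A P Q)ᴴ) = ∑ i ∈ P, ∑ j ∈ Q, A i j * A j i :=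
    trace_off A hA P Q
  have hdef : Matrix.trace ((psub A (I ∪ J)) ^ 2) + Matrix.trace ((psub A (I ∩ J)) ^ 2) -
      Matrix.trace ((psub A I) ^ 2) - Matrix.trace ((psub A J) ^ 2) =
      2 * Matrix.trace (offsub A P Q * (offsub A P Q)ᴴ) := by rw [hT, key]
  have hterm : ∀ i ∈ P, ∀ j ∈ Q, A i j * A j i = A i j * star (A i j) := by
    intro i _ j _
    rw [← hA.apply j i]
  have hsum : ∑ i ∈ P, ∑ j ∈ Q, A i j * A j i = ∑ i ∈ P, ∑ j ∈ Q, A i j * star (A i j) :=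
    Finset.sum_congr rfl fun i hi => Finset.sum_congr rfl fun j hj => hterm i hi j hj
  have hnonneg : 0 ≤ ∑ i ∈ P, ∑ j ∈ Q, A i j * A j i := by
    rw [hsum]
    exact Finset.sum_nonneg fun i _ => Finset.sum_nonneg fun j _ => mul_star_self_nonneg _
  have hTnn : 0 ≤ Matrix.trace (offsub A P Q * (offsub A P Q)ᴴ) := hT ▸ hnonneg
  have h2Tnn : 0 ≤ 2 * Matrix.trace (offsub A P Q * (offsub A P Q)ᴴ) :=
    mul_nonneg (by norm_num) hTnn
  refine ⟨?_, hdef, ?_⟩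
  · have h3 : 0 ≤ (Matrix.trace ((psub A (I ∪ J)) ^ 2) + Matrix.trace ((psub A (I ∩ J)) ^ 2)) -
        (Matrix.trace ((psub A I) ^ 2) + Matrix.trace ((psub A J) ^ 2)) := by
      rw [← sub_sub, hdef]
      exact h2Tnn
    exact sub_nonneg.mp h3
  constructor
  · intro heq
    have h0 : Matrix.trace (offsub A P Q * (offsub A P Q)ᴴ) = 0 := by
      have h4 : (2:ℂ) * Matrix.trace (offsub A P Q * (offsub A P Q)ᴴ) = 0 := by
        rw [← hdef, ← hR]; linear_combination -heq
      simpa using h4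
    have h0' : ∑ i ∈ P, ∑ j ∈ Q, A i j * star (A i j) = 0 := by rw [← hsum, ← hT]; exact h0
    have hall : ∀ i ∈ P, ∀ j ∈ Q, A i j * star (A i j) = 0 := by
      intro i hi j hj
      have h1 := (Finset.sum_eq_zero_iff_of_nonneg
        (fun i _ => Finset.sum_nonneg fun j _ => mul_star_self_nonneg (A i j))).1 h0' i hi
      exact (Finset.sum_eq_zero_iff_of_nonneg
        (fun j _ => mul_star_self_nonneg (A i j))).1 h1 j hj
    ext i j
    have hz : A (i : Fin m) (j : Fin m) = 0 := by
      rw [← Complex.normSq_eq_zero]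
      have h5 : (Complex.normSq (A (i : Fin m) (j : Fin m)) : ℂ) = 0 := by
        rw [← Complex.mul_conj]
        exact hall i i.2 j j.2
      exact_mod_cast h5
    simpa [offsub] using hz
  · intro hB
    have h6 : Matrix.trace (offsub A P Q * (offsub A P Q)ᴴ) = 0 := by rw [hB]; simp
    rw [h6, mul_zero] at hdef
    linear_combination -hdef
end

section
/- Let B be an m×m matrix with nonnegative real entries. Then for every positive integer n and all subsets I, J of {1,...,m}: tr(B[I]ⁿ) + tr(B[J]ⁿ) ≤ tr(B[I∪J]ⁿ) + tr(B[I∩J]ⁿ), with equality when n = 1. -/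
open Matrix

/-- The principal submatrix of `B` with rows and columns in `I`. -/
def rsub {m : ℕ} (B : Matrix (Fin m) (Fin m) ℝ) (I : Finset (Fin m)) :
    Matrix I I ℝ :=
  B.submatrix (fun i : I => (i : Fin m)) (fun i : I => (i : Fin m))


lemma pow_apply_walk {ι : Type*} [Fintype ι] [DecidableEq ι] (A : Matrix ι ι ℝ) :
    ∀ (n : ℕ) (i j : ι), (A ^ n) i j =
      ∑ f : Fin (n+1) → ι,
        (if f 0 = i ∧ f (Fin.last n) = j then ∏ k : Fin n, A (f k.castSucc) (f k.succ) else 0) := by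
  intro n
  induction n with
  | zero =>
      intro i j
      have h1 : (∑ f : Fin 1 → ι,
          if f 0 = i ∧ f (Fin.last 0) = j then ∏ k : Fin 0, A (f k.castSucc) (f k.succ) else 0)
          = ∑ c : ι, if c = i ∧ c = j then 1 else 0 := by
        refine (Fintype.sum_equiv (Equiv.funUnique (Fin 1) ι) _ _ ?_)
        intro f
        simp [Fin.last, Equiv.funUnique]
      rw [pow_zero, h1]
      by_cases h : i = j
      · simp [Matrix.one_apply, h]
      · have hni : ∀ c : ι, ¬(c = i ∧ c = j) := by rintro c ⟨rfl, rfl⟩; exact h rfl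
        simp [Matrix.one_apply, h, hni]
  | succ n ih =>
      intro i j
      have common : ∀ g : Fin (n+1) → ι, ℝ := fun g =>
        if g (Fin.last n) = j then A i (g 0) * ∏ k : Fin n, A (g k.castSucc) (g k.succ) else 0
      rw [pow_succ', Matrix.mul_apply]
      have lhs_eq : (∑ d : ι, A i d * (A ^ n) d j)
          = ∑ g : Fin (n+1) → ι,
              if g (Fin.last n) = j then A i (g 0) * ∏ k : Fin n, A (g k.castSucc) (g k.succ)
              else 0 := by
        simp only [ih, Finset.mul_sum]
        rw [Finset.sum_comm]
        refine Finset.sum_congr rfl ?_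
        intro g _
        by_cases h : g (Fin.last n) = j
        · simp [h]
        · simp [h]
      rw [lhs_eq]
      have rhs_eq : (∑ f : Fin (n+2) → ι,
          if f 0 = i ∧ f (Fin.last (n+1)) = j then ∏ k : Fin (n+1), A (f k.castSucc) (f k.succ)
          else 0)
          = ∑ p : ι × (Fin (n+1) → ι),
              if p.1 = i ∧ p.2 (Fin.last n) = j then
                A p.1 (p.2 0) * ∏ k : Fin n, A (p.2 k.castSucc) (p.2 k.succ) else 0 := by
        refine (Fintype.sum_equiv (Fin.consEquiv (fun _ : Fin (n+2) => ι)) _ _ ?_).symm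
        intro p
        obtain ⟨c, g⟩ := p
        have hfeq : (Fin.consEquiv (fun _ : Fin (n+2) => ι)) (c, g)
            = (Fin.cons c g : ∀ _ : Fin (n+2), ι) := rfl
        rw [hfeq]
        set f : ∀ _ : Fin (n+2), ι := Fin.cons c g with hf
        have hlast : f (Fin.last (n+1)) = g (Fin.last n) := by
          rw [hf, ← Fin.succ_last, Fin.cons_succ]
        have h0 : f 0 = c := rfl
        have hcond : (f 0 = i ∧ f (Fin.last (n+1)) = j)
            ↔ (c = i ∧ g (Fin.last n) = j) := by
          rw [h0, hlast]

        have hprod : (∏ k : Fin (n+1), A (f k.castSucc) (f k.succ))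
            = A c (g 0) * ∏ k : Fin n, A (g k.castSucc) (g k.succ) := by
          have h1 : A (f (Fin.castSucc 0)) (f (Fin.succ 0)) = A c (g 0) := by
            rw [hf]; simp
          have h2 : ∀ k : Fin n, A (f k.succ.castSucc) (f k.succ.succ)
              = A (g k.castSucc) (g k.succ) := by
            intro k
            rw [hf, ← Fin.succ_castSucc, Fin.cons_succ, Fin.cons_succ]
          rw [Fin.prod_univ_succ, h1]
          exact congrArg _ (Finset.prod_congr rfl fun k _ => h2 k)
        by_cases h : c = i ∧ g (Fin.last n) = j
        · rw [if_pos h, if_pos (hcond.mpr h), hprod]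
        · rw [if_neg h, if_neg (fun hc => h (hcond.mp hc))]
      rw [rhs_eq, Fintype.sum_prod_type, Finset.sum_comm]
      refine Finset.sum_congr rfl fun g _ => ?_
      by_cases h : g (Fin.last n) = j
      · simp [h]
      · simp [h]

lemma trace_pow_walk {ι : Type*} [Fintype ι] [DecidableEq ι] (A : Matrix ι ι ℝ) (n : ℕ) :
    Matrix.trace (A ^ n) = ∑ f : Fin (n+1) → ι,
      (if f 0 = f (Fin.last n) then ∏ k : Fin n, A (f k.castSucc) (f k.succ) else 0) := by
  rw [Matrix.trace]
  simp only [Matrix.diag, pow_apply_walk]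
  rw [Finset.sum_comm]
  refine Finset.sum_congr rfl fun f _ => ?_
  by_cases h : f 0 = f (Fin.last n)
  · rw [Finset.sum_eq_single (f 0)]
    · simp [h]
    · intro b _ hb
      rw [if_neg (fun hc => hb hc.1.symm)]
    · simp
  · rw [if_neg h]
    apply Finset.sum_eq_zero
    intro b _
    exact if_neg (fun hc => h (hc.1.trans hc.2.symm))


/-- Weight of a closed walk. -/
noncomputable def wt {m : ℕ} (B : Matrix (Fin m) (Fin m) ℝ) (n : ℕ)
    (f : Fin (n+1) → Fin m) : ℝ :=
  if f 0 = f (Fin.last n) then ∏ k : Fin n, B (f k.castSucc) (f k.succ) else 0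

lemma wt_nonneg {m : ℕ} (B : Matrix (Fin m) (Fin m) ℝ) (hB : ∀ i j, 0 ≤ B i j) (n : ℕ)
    (f : Fin (n+1) → Fin m) : 0 ≤ wt B n f := by
  unfold wt
  split
  · exact Finset.prod_nonneg fun k _ => hB _ _
  · exact le_refl 0

lemma trace_rsub_pow {m : ℕ} (B : Matrix (Fin m) (Fin m) ℝ) (n : ℕ) (K : Finset (Fin m)) :
    Matrix.trace ((rsub B K) ^ n) =
      ∑ f ∈ Finset.univ.filter (fun f : Fin (n+1) → Fin m => ∀ k, f k ∈ K), wt B n f := by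
  rw [trace_pow_walk]
  refine Finset.sum_bij (fun (f : Fin (n+1) → K) _ => fun k => (f k : Fin m))
    ?_ ?_ ?_ ?_
  · intro f _
    simp only [Finset.mem_filter, Finset.mem_univ, true_and]
    intro k; exact (f k).2
  · intro f _ f' _ h
    funext k
    exact Subtype.ext (congrFun h k)
  · intro g hg
    simp only [Finset.mem_filter, Finset.mem_univ, true_and] at hg
    exact ⟨fun k => ⟨g k, hg k⟩, Finset.mem_univ _, rfl⟩
  · intro f _
    unfold wt
    by_cases h : f 0 = f (Fin.last n)
    · rw [if_pos h, if_pos (show ((f 0 : Fin m)) = ((f (Fin.last n) : Fin m)) from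
        congrArg _ h)]
      rfl
    · rw [if_neg h, if_neg (fun hc => h (Subtype.ext hc))]

/-- For an entrywise nonnegative matrix `B` and every `n ≥ 1`, the set function
`I ↦ tr (B[I]ⁿ)` is supermodular, with equality when `n = 1`. -/
theorem trace_pow_nonneg_supermodular {m : ℕ} (B : Matrix (Fin m) (Fin m) ℝ)
    (hB : ∀ i j, 0 ≤ B i j) (n : ℕ) (hn : 1 ≤ n) (I J : Finset (Fin m)) :
    (Matrix.trace ((rsub B I) ^ n) + Matrix.trace ((rsub B J) ^ n) ≤
        Matrix.trace ((rsub B (I ∪ J)) ^ n) + Matrix.trace ((rsub B (I ∩ J)) ^ n)) ∧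
    (n = 1 →
      Matrix.trace ((rsub B I) ^ n) + Matrix.trace ((rsub B J) ^ n) =
        Matrix.trace ((rsub B (I ∪ J)) ^ n) + Matrix.trace ((rsub B (I ∩ J)) ^ n)) := by
  classical
  set SI := Finset.univ.filter (fun f : Fin (n+1) → Fin m => ∀ k, f k ∈ I) with hSI
  set SJ := Finset.univ.filter (fun f : Fin (n+1) → Fin m => ∀ k, f k ∈ J) with hSJ
  set SU := Finset.univ.filter (fun f : Fin (n+1) → Fin m => ∀ k, f k ∈ I ∪ J) with hSU
  set SN := Finset.univ.filter (fun f : Fin (n+1) → Fin m => ∀ k, f k ∈ I ∩ J) with hSN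
  have hsub : SI ∪ SJ ⊆ SU := by
    intro f hf
    simp only [hSI, hSJ, hSU, Finset.mem_union, Finset.mem_filter, Finset.mem_univ,
      true_and] at hf ⊢
    rcases hf with hf | hf <;> intro k
    · exact Or.inl (hf k)
    · exact Or.inr (hf k)
  have hinter : SI ∩ SJ = SN := by
    ext f
    simp only [hSI, hSJ, hSN, Finset.mem_inter, Finset.mem_filter, Finset.mem_univ,
      true_and, Finset.mem_inter, forall_and]
  constructor
  · rw [trace_rsub_pow, trace_rsub_pow, trace_rsub_pow, trace_rsub_pow,
      ← hSI, ← hSJ, ← hSU, ← hSN]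
    calc (∑ f ∈ SI, wt B n f) + ∑ f ∈ SJ, wt B n f
        = (∑ f ∈ SI ∪ SJ, wt B n f) + ∑ f ∈ SI ∩ SJ, wt B n f :=
          (Finset.sum_union_inter).symm
      _ ≤ (∑ f ∈ SU, wt B n f) + ∑ f ∈ SN, wt B n f := by
          refine add_le_add ?_ (le_of_eq (by rw [hinter]))
          exact Finset.sum_le_sum_of_subset_of_nonneg hsub
            (fun f _ _ => wt_nonneg B hB n f)
  · intro hn1
    subst hn1
    have h1 : ∀ K : Finset (Fin m), Matrix.trace ((rsub B K) ^ 1) = ∑ i ∈ K, B i i := by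
      intro K
      rw [pow_one, Matrix.trace]
      rw [← Finset.sum_coe_sort K (fun i => B i i)]
      rfl
    rw [h1, h1, h1, h1]
    exact (Finset.sum_union_inter).symm
end

section
/- Let A = sI − B where B is an m×m matrix with nonnegative entries and s > ρ(B) (the spectral radius of B), so A is a nonsingular M-matrix. Then for every real p with 0 ≤ p ≤ 1 and all subsets I, J of {1,...,m}: tr(A[I]^p) + tr(A[J]^p) ≥ tr(A[I∪J]^p) + tr(A[I∩J]^p), where A^p := s^p Σ_{i≥0} C(p,i) (−s)^{−i} Bⁱ (binomial series, absolutely convergent since s > ρ(B)). -/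
open Matrix

/-- Generalized binomial coefficient `C(p, i) = p (p-1) ⋯ (p-i+1) / i!`. -/
noncomputable def genBinom (p : ℝ) (i : ℕ) : ℝ :=
  (∏ k ∈ Finset.range i, (p - k)) / (Nat.factorial i)

/-- `(s·Id - B)^p`, defined by the binomial series
`s^p Σ_{i≥0} C(p,i) (-s)^{-i} Bⁱ`, absolutely convergent when `s > ρ(B)`. -/
noncomputable def mPow {n : Type*} [Fintype n] [DecidableEq n]
    (s p : ℝ) (B : Matrix n n ℝ) : Matrix n n ℝ :=
  ∑' i : ℕ, (s ^ p * genBinom p i * ((-s) ^ i)⁻¹) • B ^ i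

/-!
Expanding the series termwise, `tr (A[K]^p) = ∑ᵢ cᵢ tr (B[K]^i)` with `c₀ = s^p` and
`cᵢ = s^(p-i) (-1)^i C(p,i) ≤ 0` for `i ≥ 1`, because `0 ≤ p ≤ 1`. The `i = 0` term is
`s^p |K|`, which is modular in `K`. For `i ≥ 1`, `tr (B[K]^i)` is the total weight of the closed
walks of length `i` with all vertices in `K`; the weights are nonnegative, a walk inside `I` or
`J` lies inside `I ∪ J`, and one inside both lies inside `I ∩ J`, so `K ↦ tr (B[K]^i)` is
supermodular, and multiplying by `cᵢ ≤ 0` makes it submodular.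

Convergence comes from Gelfand's formula: `‖B^i‖ ≤ r^i` eventually for some `r < s`, and the
entries of `B[K]^i` are dominated by those of `B^i`.
-/

open Finset Filter

namespace Matrix

section Walks

variable {n R : Type*} [Fintype n] [DecidableEq n] [CommSemiring R]

theorem pow_succ_apply_eq_sum_prod (M : Matrix n n R) (k : ℕ) (a b : n) :
    (M ^ (k + 1)) a b = ∑ f : Fin k → n,
      ∏ j, M (Fin.cons (α := fun _ => n) a f j) (Fin.snoc (α := fun _ => n) f b j) := by
  induction k generalizing a with
  | zero => simp [Fin.snoc]
  | succ k ih =>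
    rw [pow_succ', mul_apply, ← (Fin.consEquiv fun _ => n).sum_comp, Fintype.sum_prod_type]
    refine sum_congr rfl fun c _ => ?_
    rw [ih, mul_sum]
    refine sum_congr rfl fun f _ => ?_
    simp [Fin.prod_univ_succ, Fin.consEquiv, ← Fin.cons_snoc_eq_snoc_cons]

theorem trace_pow_succ_eq_sum_prod (M : Matrix n n R) (k : ℕ) :
    trace (M ^ (k + 1)) = ∑ g : Fin (k + 1) → n, ∏ j, M (g j) (g (finRotate _ j)) := by
  rw [← (Fin.consEquiv fun _ => n).sum_comp, Fintype.sum_prod_type]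
  refine sum_congr rfl fun a _ => ?_
  simp [pow_succ_apply_eq_sum_prod, Fin.consEquiv, Fin.snoc_eq_cons_rotate]

end Walks

theorem submatrix_pow_apply_le {n ι R : Type*} [Fintype n] [DecidableEq n] [Fintype ι]
    [DecidableEq ι] [Semiring R] [PartialOrder R] [IsOrderedRing R] {M : Matrix n n R}
    (hM : ∀ a b, 0 ≤ M a b) {e : ι → n} (he : e.Injective) (k : ℕ) (a b : ι) :
    ((M.submatrix e e) ^ k) a b ≤ (M ^ k) (e a) (e b) := by
  induction k generalizing b with
  | zero => simp [one_apply, he.eq_iff]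
  | succ k ih =>
    rw [pow_succ, pow_succ, mul_apply, mul_apply]
    calc ∑ c, ((M.submatrix e e) ^ k) a c * M (e c) (e b)
        ≤ ∑ c, (M ^ k) (e a) (e c) * M (e c) (e b) :=
          sum_le_sum fun c _ => mul_le_mul_of_nonneg_right (ih c) (hM _ _)
      _ = ∑ x ∈ univ.map ⟨e, he⟩, (M ^ k) (e a) x * M x (e b) := by
          rw [sum_map]; rfl
      _ ≤ ∑ x, (M ^ k) (e a) x * M x (e b) :=
          sum_le_sum_of_subset_of_nonneg (subset_univ _) fun x _ _ =>
            mul_nonneg (pow_apply_nonneg hM k _ _) (hM _ _)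

end Matrix

namespace Fintype

variable {ι α R : Type*} [Fintype ι] [DecidableEq ι]

theorem sum_pi_subtype_eq_sum_piFinset [DecidableEq α] [AddCommMonoid R] (S : Finset α)
    (F : (ι → α) → R) :
    ∑ g : ι → S, F (fun i => g i) = ∑ g ∈ piFinset fun _ => S, F g :=
  sum_bij' (fun g _ i => g i) (fun g hg i => ⟨g i, mem_piFinset.1 hg i⟩)
    (fun g _ => mem_piFinset.2 fun i => (g i).2) (fun _ _ => mem_univ _)
    (fun _ _ => rfl) (fun _ _ => rfl) (fun _ _ => rfl)

theorem sum_piFinset_supermodular [DecidableEq α] [AddCommMonoid R] [PartialOrder R]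
    [IsOrderedAddMonoid R] {w : (ι → α) → R} (hw : ∀ g, 0 ≤ w g) (I J : Finset α) :
    ∑ g ∈ piFinset fun _ => I, w g + ∑ g ∈ piFinset fun _ => J, w g ≤
      ∑ g ∈ piFinset fun _ => I ∪ J, w g + ∑ g ∈ piFinset fun _ => I ∩ J, w g := by
  rw [← sum_union_inter, ← piFinset_inter]
  gcongr
  · exact fun g _ _ => hw g
  · exact union_subset (piFinset_subset _ _ fun _ => subset_union_left)
      (piFinset_subset _ _ fun _ => subset_union_right)

end Fintype

section PrincipalSubmatrix

variable {m : ℕ} {B : Matrix (Fin m) (Fin m) ℝ}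

theorem trace_rsub_pow_succ (K : Finset (Fin m)) (k : ℕ) :
    trace ((rsub B K) ^ (k + 1)) =
      ∑ g ∈ Fintype.piFinset fun _ : Fin (k + 1) => K, ∏ j, B (g j) (g (finRotate _ j)) := by
  rw [trace_pow_succ_eq_sum_prod]
  exact Fintype.sum_pi_subtype_eq_sum_piFinset K fun g => ∏ j, B (g j) (g (finRotate _ j))

theorem trace_rsub_pow_succ_supermodular (hB : ∀ a b, 0 ≤ B a b) (k : ℕ)
    (I J : Finset (Fin m)) :
    trace ((rsub B I) ^ (k + 1)) + trace ((rsub B J) ^ (k + 1)) ≤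
      trace ((rsub B (I ∪ J)) ^ (k + 1)) + trace ((rsub B (I ∩ J)) ^ (k + 1)) := by
  simp only [trace_rsub_pow_succ]
  exact Fintype.sum_piFinset_supermodular (fun g => prod_nonneg fun j _ => hB _ _) I J

end PrincipalSubmatrix

theorem genBinom_zero (p : ℝ) : genBinom p 0 = 1 := by simp [genBinom]

theorem genBinom_succ (p : ℝ) (i : ℕ) :
    genBinom p (i + 1) = genBinom p i * (p - i) / (i + 1) := by
  simp only [genBinom, prod_range_succ, Nat.factorial_succ, Nat.cast_mul, Nat.cast_succ]
  field_simp

theorem abs_genBinom_le_one {p : ℝ} (hp : |p| ≤ 1) (i : ℕ) : |genBinom p i| ≤ 1 := by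
  induction i with
  | zero => simp [genBinom_zero]
  | succ i ih =>
    have hi : |p - i| ≤ i + 1 := (abs_sub _ _).trans (by rw [Nat.abs_cast]; linarith)
    rw [genBinom_succ, abs_div, abs_mul, abs_of_pos (by positivity : (0 : ℝ) < i + 1),
      div_le_one (by positivity)]
    calc |genBinom p i| * |p - i| ≤ 1 * (i + 1) := by gcongr
      _ = i + 1 := one_mul _

theorem neg_one_pow_mul_genBinom_nonpos {p : ℝ} (hp0 : 0 ≤ p) (hp1 : p ≤ 1) {i : ℕ}
    (hi : i ≠ 0) : (-1) ^ i * genBinom p i ≤ 0 := by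
  obtain ⟨i, rfl⟩ := Nat.exists_eq_succ_of_ne_zero hi
  induction i with
  | zero => simp [genBinom_succ, genBinom_zero, hp0]
  | succ i ih =>
    have hpi : 0 ≤ (i + 1 - p) / (i + 2) := div_nonneg (by linarith) (by positivity)
    calc (-1) ^ (i + 2) * genBinom p (i + 2)
        = (-1) ^ (i + 1) * genBinom p (i + 1) * ((i + 1 - p) / (i + 2)) := by
          rw [genBinom_succ]; push_cast; ring
      _ ≤ 0 := mul_nonpos_of_nonpos_of_nonneg (ih i.succ_ne_zero) hpi

noncomputable def mPowCoeff (s p : ℝ) (i : ℕ) : ℝ := s ^ p * genBinom p i * ((-s) ^ i)⁻¹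

theorem mPow_eq_tsum {n : Type*} [Fintype n] [DecidableEq n] (s p : ℝ) (M : Matrix n n ℝ) :
    mPow s p M = ∑' k, mPowCoeff s p k • M ^ k :=
  rfl

theorem mPowCoeff_eq (s p : ℝ) (i : ℕ) :
    mPowCoeff s p i = s ^ p / s ^ i * ((-1) ^ i * genBinom p i) := by
  rw [mPowCoeff, neg_pow, mul_inv, ← inv_pow, inv_neg_one]
  ring

theorem abs_mPowCoeff_le {s p : ℝ} (hs : 0 < s) (hp : |p| ≤ 1) (i : ℕ) :
    |mPowCoeff s p i| ≤ s ^ p / s ^ i := by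
  rw [mPowCoeff_eq, abs_mul, abs_mul, abs_neg_one_pow, one_mul, abs_of_pos (by positivity)]
  exact mul_le_of_le_one_right (by positivity) (abs_genBinom_le_one hp i)

theorem mPowCoeff_nonpos {s p : ℝ} (hs : 0 < s) (hp0 : 0 ≤ p) (hp1 : p ≤ 1) {i : ℕ}
    (hi : i ≠ 0) : mPowCoeff s p i ≤ 0 := by
  rw [mPowCoeff_eq]
  exact mul_nonpos_of_nonneg_of_nonpos (by positivity)
    (neg_one_pow_mul_genBinom_nonpos hp0 hp1 hi)

theorem spectrum.summable_norm_pow_div_pow_of_spectralRadius_lt {A : Type*} [NormedRing A]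
    [NormedAlgebra ℂ A] [CompleteSpace A] {a : A} {s : ℝ}
    (h : spectralRadius ℂ a < ENNReal.ofReal s) : Summable fun n => ‖a ^ n‖ / s ^ n := by
  obtain ⟨r, hr, har, hrs⟩ := ENNReal.lt_iff_exists_real_btwn.1 h
  obtain ⟨hrs, hs⟩ := ENNReal.ofReal_lt_ofReal_iff'.1 hrs
  have hev : ∀ᶠ n : ℕ in atTop, ‖a ^ n‖ ≤ r ^ n := by
    filter_upwards [(pow_norm_pow_one_div_tendsto_nhds_spectralRadius a).eventually_lt_const har,
      eventually_ne_atTop 0] with n hn hn0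
    have := (ENNReal.ofReal_lt_ofReal_iff'.1 hn).1
    rw [one_div, Real.rpow_inv_lt_iff_of_pos (norm_nonneg _) hr (by positivity),
      Real.rpow_natCast] at this
    exact this.le
  refine .of_norm_bounded_eventually_nat (summable_geometric_of_lt_one (div_nonneg hr hs.le)
    ((div_lt_one hs).2 hrs)) ?_
  filter_upwards [hev] with n hn
  rw [Real.norm_eq_abs, abs_div, abs_norm, abs_of_pos (pow_pos hs n), div_pow]
  gcongr

attribute [local instance] Matrix.linftyOpNormedRing Matrix.linftyOpNormedAlgebra in
theorem Matrix.summable_abs_pow_apply_div_pow {n : Type*} [Fintype n] [DecidableEq n]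
    (B : Matrix n n ℝ) {s : ℝ}
    (hs : spectralRadius ℂ (B.map Complex.ofReal) < ENNReal.ofReal s) (a b : n) :
    Summable fun k => |(B ^ k) a b| / s ^ k := by
  have hs0 : 0 < s := ENNReal.ofReal_pos.1 (zero_le.trans_lt hs)
  refine (spectrum.summable_norm_pow_div_pow_of_spectralRadius_lt hs).of_nonneg_of_le
    (fun k => by positivity) fun k => div_le_div_of_nonneg_right ?_ (by positivity)
  have hmap : B.map Complex.ofReal ^ k = (B ^ k).map Complex.ofReal :=
    (Matrix.map_pow B Complex.ofRealHom k).symm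
  calc |(B ^ k) a b| = ‖(B.map Complex.ofReal ^ k) a b‖ := by
        rw [hmap, map_apply, Complex.norm_real, Real.norm_eq_abs]
    _ ≤ ‖B.map Complex.ofReal ^ k‖ := by
        -- the ℓ∞ operator norm is the largest ℓ¹ norm of a row
        have h1 := PiLp.norm_apply_le (WithLp.toLp 1 ((B.map Complex.ofReal ^ k) a)) b
        have h2 := norm_le_pi_norm (fun i => WithLp.toLp 1 ((B.map Complex.ofReal ^ k) i)) a
        exact h1.trans h2

theorem hasSum_trace_mPow {n : Type*} [Fintype n] [DecidableEq n] {M : Matrix n n ℝ}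
    {s p : ℝ} (hs : 0 < s) (hp : |p| ≤ 1)
    (hM : ∀ a b, Summable fun k => |(M ^ k) a b| / s ^ k) :
    HasSum (fun k => mPowCoeff s p k * trace (M ^ k)) (trace (mPow s p M)) := by
  have hentry (a b : n) : Summable fun k => mPowCoeff s p k * (M ^ k) a b := by
    refine .of_norm_bounded ((hM a b).mul_left (s ^ p)) fun k => ?_
    rw [Real.norm_eq_abs, abs_mul]
    calc |mPowCoeff s p k| * |(M ^ k) a b| ≤ s ^ p / s ^ k * |(M ^ k) a b| := by
          gcongr; exact abs_mPowCoeff_le hs hp k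
      _ = s ^ p * (|(M ^ k) a b| / s ^ k) := by ring
  have hsum : Summable fun k => mPowCoeff s p k • M ^ k :=
    Pi.summable.2 fun a => Pi.summable.2 fun b => by simpa using hentry a b
  rw [mPow_eq_tsum]
  simpa only [Function.comp_def, traceAddMonoidHom_apply, trace_smul, smul_eq_mul] using
    hsum.hasSum.map (traceAddMonoidHom n ℝ) continuous_id.matrix_trace

theorem hasSum_trace_mPow_rsub {m : ℕ} {B : Matrix (Fin m) (Fin m) ℝ}
    (hB : ∀ a b, 0 ≤ B a b) {s p : ℝ}
    (hs : spectralRadius ℂ (B.map Complex.ofReal) < ENNReal.ofReal s)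
    (hp : |p| ≤ 1) (K : Finset (Fin m)) :
    HasSum (fun k => mPowCoeff s p k * trace ((rsub B K) ^ k)) (trace (mPow s p (rsub B K))) := by
  have hs0 : 0 < s := ENNReal.ofReal_pos.1 (zero_le.trans_lt hs)
  refine hasSum_trace_mPow hs0 hp fun a b =>
    (B.summable_abs_pow_apply_div_pow hs a b).of_nonneg_of_le (fun k => by positivity)
      fun k => div_le_div_of_nonneg_right ?_ (by positivity)
  have hnonneg : 0 ≤ ((rsub B K) ^ k) a b := pow_apply_nonneg (fun _ _ => hB _ _) k a b
  have hle : ((rsub B K) ^ k) a b ≤ (B ^ k) a b :=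
    submatrix_pow_apply_le hB Subtype.val_injective k a b
  rw [abs_of_nonneg hnonneg]
  exact hle.trans (le_abs_self _)

/-- For a nonsingular M-matrix `A = s·Id − B` (with `B ≥ 0` entrywise and
`s > ρ(B)`) and `0 ≤ p ≤ 1`, the set function `I ↦ tr (A[I]^p)` is submodular,
where `A[I]^p = (s·Id − B[I])^p` is given by the binomial series. -/
theorem trace_mmatrix_rpow_submodular {m : ℕ} (B : Matrix (Fin m) (Fin m) ℝ)
    (hB : ∀ i j, 0 ≤ B i j) (s : ℝ)
    (hs : spectralRadius ℂ (B.map (Complex.ofReal)) < ENNReal.ofReal s)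
    (p : ℝ) (hp0 : 0 ≤ p) (hp1 : p ≤ 1) (I J : Finset (Fin m)) :
    Matrix.trace (mPow s p (rsub B (I ∪ J))) + Matrix.trace (mPow s p (rsub B (I ∩ J))) ≤
      Matrix.trace (mPow s p (rsub B I)) + Matrix.trace (mPow s p (rsub B J)) := by
  have hs0 : 0 < s := ENNReal.ofReal_pos.1 (zero_le.trans_lt hs)
  have hseries := hasSum_trace_mPow_rsub hB hs (abs_le.2 ⟨by linarith, hp1⟩)
  refine hasSum_le (fun k => ?_) ((hseries _).add (hseries _)) ((hseries _).add (hseries _))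
  rw [← mul_add, ← mul_add]
  rcases k with _ | k
  · have hcard : (#(I ∪ J) + #(I ∩ J) : ℝ) = #I + #J := by
      exact_mod_cast card_union_add_card_inter I J
    simp only [pow_zero, trace_one, Fintype.card_coe, hcard, le_refl]
  · exact mul_le_mul_of_nonpos_left (trace_rsub_pow_succ_supermodular hB k I J)
      (mPowCoeff_nonpos hs0 hp0 hp1 k.succ_ne_zero)
end

section
/- Let A = sI − B where B is an m×m matrix with nonnegative entries and s > ρ(B). Then the function I ↦ tr(A[I] log A[I]) on subsets of {1,...,m} is supermodular: tr(A[I] log A[I]) + tr(A[J] log A[J]) ≤ tr(A[I∪J] log A[I∪J]) + tr(A[I∩J] log A[I∩J]). -/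
open Matrix

/-- `log (s·Id − B)`, defined by the series
`(log s)·Id − Σ_{i≥1} Bⁱ/(i sⁱ)`, absolutely convergent when `s > ρ(B)`. -/
noncomputable def mLog {n : Type*} [Fintype n] [DecidableEq n]
    (s : ℝ) (B : Matrix n n ℝ) : Matrix n n ℝ :=
  (Real.log s) • (1 : Matrix n n ℝ) -
    ∑' i : ℕ, ((1 : ℝ) / ((i + 1) * s ^ (i + 1))) • B ^ (i + 1)

/-- `A log A` for the M-matrix `A = s·Id − B`, defined via power series in `B`. -/
noncomputable def mXLogX {n : Type*} [Fintype n] [DecidableEq n]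
    (s : ℝ) (B : Matrix n n ℝ) : Matrix n n ℝ :=
  (s • (1 : Matrix n n ℝ) - B) * mLog s B

/-!
Expanding `A log A = (s − B)(log s − ∑_{k ≥ 1} Bᵏ/(k sᵏ))` and taking traces gives
`tr (A[K] log A[K]) = s log s · |K| − (1 + log s) · tr B[K] + ∑_{k ≥ 1} tr (B[K]ᵏ⁺¹)/(k(k+1)sᵏ)`.
The first two terms are modular in `K`. For `p ≥ 1`, `tr (B[K]ᵖ)` is the sum of the nonnegative
weights of the closed walks of length `p` with all vertices in `K`; a walk inside `I` and inside
`J` lies inside `I ∩ J`, and one inside `I` or `J` lies inside `I ∪ J`, so these traces are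
supermodular, and so is the series since its coefficients are nonnegative. The series converges
for every `K` because `0 ≤ B[K]ᵖ ≤ Bᵖ` entrywise and, by Gelfand's formula, `‖Bᵖ‖ ≤ rᵖ`
eventually for any `r` with `ρ(B) < r < s`.
-/

open Filter Fintype
open scoped ENNReal

theorem Fintype.sum_comp_val_eq_sum_piFinset {ι α M : Type*} [Fintype ι] [DecidableEq ι]
    [AddCommMonoid M] (K : Finset α) (F : (ι → α) → M) :
    ∑ f : ι → K, F (Subtype.val ∘ f) = ∑ g ∈ piFinset fun _ : ι => K, F g := by
  let e : (ι → K) ≃ piFinset fun _ : ι => K :=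
    ((Equiv.subtypeEquivRight fun _ => mem_piFinset).trans
      (Equiv.subtypePiEquivPi (p := fun _ a => a ∈ K))).symm
  exact (Fintype.sum_equiv e _ (fun g => F g) fun _ => rfl).trans (Finset.sum_coe_sort _ _)

theorem Fintype.sum_piFinset_supermodular_s11 {ι M : Type*} {δ : ι → Type*} [Fintype ι]
    [DecidableEq ι] [∀ i, DecidableEq (δ i)] [AddCommMonoid M] [PartialOrder M]
    [IsOrderedAddMonoid M] (w : (∀ i, δ i) → M) (hw : ∀ g, 0 ≤ w g) (s t : ∀ i, Finset (δ i)) :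
    ∑ g ∈ piFinset s, w g + ∑ g ∈ piFinset t, w g ≤
      ∑ g ∈ piFinset fun i => s i ∪ t i, w g + ∑ g ∈ piFinset fun i => s i ∩ t i, w g := by
  rw [← Finset.sum_union_inter, ← piFinset_inter]
  have h_union : piFinset s ∪ piFinset t ⊆ piFinset fun i => s i ∪ t i :=
    Finset.union_subset (piFinset_subset _ _ fun _ => Finset.subset_union_left)
      (piFinset_subset _ _ fun _ => Finset.subset_union_right)
  exact add_le_add_left (Finset.sum_le_sum_of_subset_of_nonneg h_union fun g _ _ => hw g) _

namespace Matrix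

variable {n R : Type*}

def pathWeight [Mul R] (N : Matrix n n R) : (k : ℕ) → n → (Fin k → n) → n → R
  | 0, a, _, b => N a b
  | k + 1, a, f, b => N a (f 0) * pathWeight N k (f 0) (Fin.tail f) b

theorem pathWeight_submatrix {m : Type*} [Mul R] (N : Matrix n n R) (e : m → n) :
    ∀ (k : ℕ) (a : m) (f : Fin k → m) (b : m),
      pathWeight (N.submatrix e e) k a f b = pathWeight N k (e a) (e ∘ f) (e b)
  | 0, _, _, _ => rfl
  | k + 1, a, f, b => by
    simp only [pathWeight, submatrix_apply, pathWeight_submatrix N e k]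
    rfl

theorem pathWeight_nonneg [Semiring R] [PartialOrder R] [IsOrderedRing R] {N : Matrix n n R}
    (hN : ∀ i j, 0 ≤ N i j) : ∀ (k : ℕ) (a : n) (f : Fin k → n) (b : n), 0 ≤ pathWeight N k a f b
  | 0, a, _, b => hN a b
  | k + 1, _, _, _ => mul_nonneg (hN _ _) (pathWeight_nonneg hN k _ _ _)

theorem pow_succ_apply_eq_sum_pathWeight [Fintype n] [DecidableEq n] [Semiring R]
    (N : Matrix n n R) (k : ℕ) (a b : n) :
    (N ^ (k + 1)) a b = ∑ f : Fin k → n, pathWeight N k a f b := by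
  induction k generalizing a with
  | zero => simp [pathWeight]
  | succ k ih =>
    rw [pow_succ', mul_apply, ← (Fin.consEquiv fun _ => n).sum_comp, Fintype.sum_prod_type]
    simp [ih, pathWeight, Finset.mul_sum, Fin.consEquiv]

variable [DecidableEq n]

section Semiring

variable [Semiring R] (N : Matrix n n R) (K : Finset n)

theorem submatrix_pow_succ_apply (k : ℕ) (a b : K) :
    (N.submatrix ((↑) : K → n) (↑) ^ (k + 1)) a b =
      ∑ f ∈ piFinset fun _ => K, pathWeight N k a f b := by
  simp only [pow_succ_apply_eq_sum_pathWeight, pathWeight_submatrix]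
  exact Fintype.sum_comp_val_eq_sum_piFinset K (pathWeight N k a · b)

theorem trace_submatrix_pow_succ (k : ℕ) :
    trace (N.submatrix ((↑) : K → n) (↑) ^ (k + 1)) =
      ∑ g ∈ piFinset fun _ : Fin (k + 1) => K, pathWeight N k (g 0) (Fin.tail g) (g 0) := by
  simp only [trace, diag_apply, pow_succ_apply_eq_sum_pathWeight, pathWeight_submatrix]
  rw [← Fintype.sum_comp_val_eq_sum_piFinset K, ← (Fin.consEquiv fun _ => K).sum_comp,
    Fintype.sum_prod_type]
  rfl

end Semiring

section OrderedSemiring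

variable [Semiring R] [PartialOrder R] [IsOrderedRing R] {N : Matrix n n R}

theorem submatrix_pow_succ_apply_le [Fintype n] (hN : ∀ i j, 0 ≤ N i j) (K : Finset n) (k : ℕ)
    (a b : K) : (N.submatrix ((↑) : K → n) (↑) ^ (k + 1)) a b ≤ (N ^ (k + 1)) a b := by
  rw [submatrix_pow_succ_apply, pow_succ_apply_eq_sum_pathWeight]
  exact Finset.sum_le_sum_of_subset_of_nonneg (Finset.subset_univ _)
    fun f _ _ => pathWeight_nonneg hN k _ f _

theorem trace_submatrix_pow_succ_supermodular (hN : ∀ i j, 0 ≤ N i j) (k : ℕ) (I J : Finset n) :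
    trace (N.submatrix ((↑) : I → n) (↑) ^ (k + 1)) +
        trace (N.submatrix ((↑) : J → n) (↑) ^ (k + 1)) ≤
      trace (N.submatrix ((↑) : ↥(I ∪ J) → n) (↑) ^ (k + 1)) +
        trace (N.submatrix ((↑) : ↥(I ∩ J) → n) (↑) ^ (k + 1)) := by
  rw [trace_submatrix_pow_succ, trace_submatrix_pow_succ, trace_submatrix_pow_succ,
    trace_submatrix_pow_succ]
  exact Fintype.sum_piFinset_supermodular_s11 _ (fun g => pathWeight_nonneg hN k _ _ _) _ _

end OrderedSemiring

theorem summable_smul_submatrix_pow_succ [Fintype n] {N : Matrix n n ℝ} (hN : ∀ i j, 0 ≤ N i j)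
    {c : ℕ → ℝ} (hc : ∀ i, 0 ≤ c i) (h : Summable fun i => c i • N ^ (i + 1)) (K : Finset n) :
    Summable fun i => c i • (N.submatrix (↑) (↑) : Matrix K K ℝ) ^ (i + 1) := by
  refine Pi.summable.2 fun a : K => Pi.summable.2 fun b : K => ?_
  refine .of_nonneg_of_le (fun i => ?_) (fun i => ?_) (Pi.summable.1 (Pi.summable.1 h a) b)
  · exact mul_nonneg (hc i) (pow_apply_nonneg (fun _ _ => hN _ _) _ _ _)
  · exact mul_le_mul_of_nonneg_left (submatrix_pow_succ_apply_le hN K i a b) (hc i)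

end Matrix

-- `mLog s B = Real.log s • 1 - ∑' i, logCoeff s i • B ^ (i + 1)` holds by `rfl`.
noncomputable def logCoeff (s : ℝ) (i : ℕ) : ℝ := 1 / ((i + 1) * s ^ (i + 1))

noncomputable def xlogxCoeff (s : ℝ) (i : ℕ) : ℝ := 1 / ((i + 1) * (i + 2) * s ^ (i + 1))

section Coeff

variable {s : ℝ} (i : ℕ)

theorem logCoeff_nonneg (hs : 0 ≤ s) : 0 ≤ logCoeff s i := by
  unfold logCoeff; positivity

theorem logCoeff_le_inv_pow (hs : 0 < s) : logCoeff s i ≤ (s ^ (i + 1))⁻¹ := by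
  rw [logCoeff, one_div]
  gcongr
  exact le_mul_of_one_le_left (by positivity) (by simp)

theorem xlogxCoeff_nonneg (hs : 0 ≤ s) : 0 ≤ xlogxCoeff s i := by
  unfold xlogxCoeff; positivity

theorem logCoeff_zero : logCoeff s 0 = s⁻¹ := by
  simp [logCoeff]

theorem logCoeff_sub_mul_logCoeff_succ (hs : s ≠ 0) :
    logCoeff s i - s * logCoeff s (i + 1) = xlogxCoeff s i := by
  unfold logCoeff xlogxCoeff
  push_cast
  field_simp
  ring

end Coeff

section XLogX

variable {n : Type*} [Fintype n] [DecidableEq n] {s : ℝ} {M : Matrix n n ℝ}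

theorem hasSum_mXLogX (hs : s ≠ 0) (h : Summable fun i => logCoeff s i • M ^ (i + 1)) :
    HasSum (fun i => xlogxCoeff s i • M ^ (i + 2))
      (mXLogX s M - (s * Real.log s) • 1 + (1 + Real.log s) • M) := by
  set T := ∑' i, logCoeff s i • M ^ (i + 1)
  have hMT : HasSum (fun i => logCoeff s i • M ^ (i + 2)) (M * T) := by
    simpa [Matrix.mul_smul, ← pow_succ'] using h.hasSum.mul_left M
  have hsT : HasSum (fun i => s • logCoeff s (i + 1) • M ^ (i + 2)) (s • T - M) := by
    simpa [logCoeff_zero, smul_sub, hs] using ((hasSum_nat_add_iff' 1).2 h.hasSum).const_smul s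
  have h_coeff : (fun i => xlogxCoeff s i • M ^ (i + 2)) =
      fun i => logCoeff s i • M ^ (i + 2) - s • logCoeff s (i + 1) • M ^ (i + 2) := by
    ext1 i
    rw [← logCoeff_sub_mul_logCoeff_succ i hs, sub_smul, mul_smul]
  have h_sum : mXLogX s M - (s * Real.log s) • 1 + (1 + Real.log s) • M = M * T - (s • T - M) := by
    change (s • 1 - M) * (Real.log s • 1 - T) - _ + _ = _
    simp only [sub_mul, mul_sub, smul_mul_smul, one_mul, mul_one, Matrix.mul_smul, Matrix.smul_mul]
    module
  rw [h_coeff, h_sum]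
  exact hMT.sub hsT

theorem hasSum_trace_mXLogX (hs : s ≠ 0) (h : Summable fun i => logCoeff s i • M ^ (i + 1)) :
    HasSum (fun i => xlogxCoeff s i * trace (M ^ (i + 2)))
      (trace (mXLogX s M) - s * Real.log s * Fintype.card n + (1 + Real.log s) * trace M) := by
  simpa [Function.comp_def, trace_smul, mul_comm] using
    (hasSum_mXLogX hs h).map (traceAddMonoidHom n ℝ) continuous_id.matrix_trace

end XLogX

theorem summable_norm_pow_div_of_spectralRadius_lt {A : Type*} [NormedRing A] [NormedAlgebra ℂ A]
    [CompleteSpace A] {a : A} {s : ℝ} (h : spectralRadius ℂ a < ENNReal.ofReal s) :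
    Summable fun k => ‖a ^ k‖ / s ^ k := by
  obtain ⟨r, hρr, hrs⟩ := ENNReal.lt_iff_exists_nnreal_btwn.1 h
  rw [ENNReal.coe_lt_ofReal] at hrs
  have hs : 0 < s := r.coe_nonneg.trans_lt hrs
  have h_pow : ∀ᶠ k in atTop, ‖a ^ k‖ ≤ (r : ℝ) ^ k := by
    filter_upwards [(spectrum.gelfand_formula a).eventually (gt_mem_nhds hρr),
      eventually_ne_atTop 0] with k hk hk0
    have : (‖a ^ k‖₊ : ℝ≥0∞) < (r : ℝ≥0∞) ^ k := by
      rw [← ENNReal.rpow_inv_natCast_pow hk0 ‖a ^ k‖₊]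
      exact ENNReal.pow_lt_pow_left hk0 (by simpa using hk)
    exact_mod_cast this.le
  refine .of_norm_bounded_eventually_nat
    (summable_geometric_of_lt_one (by positivity) ((div_lt_one hs).2 hrs)) ?_
  filter_upwards [h_pow] with k hk
  rw [Real.norm_of_nonneg (by positivity), div_pow]
  gcongr

section LinftyOpNorm

attribute [local instance] Matrix.linftyOpSeminormedAddCommGroup Matrix.linftyOpNormedRing
  Matrix.linftyOpNormedAlgebra

theorem Matrix.nnnorm_apply_le_linfty_opNNNorm {m n α : Type*} [Fintype m] [Fintype n]
    [SeminormedAddCommGroup α] (A : Matrix m n α) (i : m) (j : n) : ‖A i j‖₊ ≤ ‖A‖₊ := by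
  rw [linfty_opNNNorm_def]
  exact (Finset.single_le_sum (fun _ _ => zero_le) (Finset.mem_univ j)).trans
    (Finset.le_sup (f := fun i => ∑ j, ‖A i j‖₊) (Finset.mem_univ i))

theorem summable_logCoeff_smul_pow_succ {n : Type*} [Fintype n] [DecidableEq n]
    {B : Matrix n n ℝ} {s : ℝ} (hs : spectralRadius ℂ (B.map Complex.ofReal) < ENNReal.ofReal s) :
    Summable fun i => logCoeff s i • B ^ (i + 1) := by
  have hs0 : 0 < s := ENNReal.ofReal_pos.1 (pos_of_gt hs)
  have h_norm := (summable_nat_add_iff 1).2 (summable_norm_pow_div_of_spectralRadius_lt hs)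
  refine Pi.summable.2 fun a => Pi.summable.2 fun b => .of_norm_bounded h_norm fun i => ?_
  have h_entry : |(B ^ (i + 1)) a b| ≤ ‖B.map Complex.ofReal ^ (i + 1)‖ := by
    have h_map : B.map Complex.ofReal ^ (i + 1) = (B ^ (i + 1)).map Complex.ofReal :=
      (Matrix.map_pow B Complex.ofRealHom _).symm
    have := Matrix.nnnorm_apply_le_linfty_opNNNorm (B.map Complex.ofReal ^ (i + 1)) a b
    rw [h_map] at this ⊢
    simpa [← NNReal.coe_le_coe] using this
  calc ‖(logCoeff s i • B ^ (i + 1)) a b‖ = logCoeff s i * |(B ^ (i + 1)) a b| := by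
        simp [abs_of_nonneg (logCoeff_nonneg i hs0.le)]
    _ ≤ (s ^ (i + 1))⁻¹ * ‖B.map Complex.ofReal ^ (i + 1)‖ := by
        gcongr
        exact logCoeff_le_inv_pow i hs0
    _ = ‖B.map Complex.ofReal ^ (i + 1)‖ / s ^ (i + 1) := inv_mul_eq_div _ _

end LinftyOpNorm

/-- For a nonsingular M-matrix `A = s·Id − B` (with `B ≥ 0` entrywise and
`s > ρ(B)`), the set function `I ↦ tr (A[I] log A[I])` is supermodular. -/
theorem trace_mmatrix_xlogx_supermodular {m : ℕ} (B : Matrix (Fin m) (Fin m) ℝ)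
    (hB : ∀ i j, 0 ≤ B i j) (s : ℝ)
    (hs : spectralRadius ℂ (B.map (Complex.ofReal)) < ENNReal.ofReal s)
    (I J : Finset (Fin m)) :
    Matrix.trace (mXLogX s (rsub B I)) + Matrix.trace (mXLogX s (rsub B J)) ≤
      Matrix.trace (mXLogX s (rsub B (I ∪ J))) + Matrix.trace (mXLogX s (rsub B (I ∩ J))) := by
  have hs0 : 0 < s := ENNReal.ofReal_pos.1 (pos_of_gt hs)
  have h_series (K : Finset (Fin m)) :
      HasSum (fun i => xlogxCoeff s i * trace (rsub B K ^ (i + 2)))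
        (trace (mXLogX s (rsub B K)) - s * Real.log s * K.card +
          (1 + Real.log s) * trace (rsub B K)) := by
    rw [← Fintype.card_coe]
    exact hasSum_trace_mXLogX hs0.ne'
      (summable_smul_submatrix_pow_succ hB (logCoeff_nonneg · hs0.le)
        (summable_logCoeff_smul_pow_succ hs) K)
  have h_le := hasSum_le (fun i => by
      rw [← mul_add, ← mul_add]
      exact mul_le_mul_of_nonneg_left
        (trace_submatrix_pow_succ_supermodular hB (i + 1) I J) (xlogxCoeff_nonneg i hs0.le))
    ((h_series I).add (h_series J)) ((h_series (I ∪ J)).add (h_series (I ∩ J)))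
  have h_card : ((I ∪ J).card : ℝ) + (I ∩ J).card = I.card + J.card := by
    exact_mod_cast Finset.card_union_add_card_inter I J
  have h_trace : trace (rsub B (I ∪ J)) + trace (rsub B (I ∩ J)) =
      trace (rsub B I) + trace (rsub B J) := by
    simp only [rsub, trace, diag_apply, submatrix_apply, Finset.sum_coe_sort _ fun x => B x x]
    exact Finset.sum_union_inter
  linear_combination h_le - s * Real.log s * h_card + (1 + Real.log s) * h_trace
end

section
/- For any m×m positive semidefinite Hermitian matrix A and any k ∈ {1,...,m}, the maximum of |det A[I,J]| over all pairs of subsets I, J ⊆ {1,...,m} with |I| = |J| = k is attained with I = J; that is, max_{|I|=|J|=k} |det A[I,J]| = max_{|I|=k} det A[I]. -/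
/-!
Write `A = Bᴴ * B`. Then `A[I,J] = B[:,I]ᴴ * B[:,J]`, and the Cauchy–Binet formula, symmetrized
as `k! * det (Xᴴ * Y) = ∑ p, conj (det X[p,:]) * det Y[p,:]` over *all* maps `p` from `k` indices
into the rows, presents `k! * det A[I,J]` as an inner product of the vectors of `k × k` minors of
`B[:,I]` and `B[:,J]`, while `k! * det A[I]` is the squared length of the first. Cauchy–Schwarz
gives `|det A[I,J]|² ≤ det A[I] * det A[J]`, so a principal minor of maximal modulus dominates all
minors.
-/

open Matrix
open scoped ComplexOrder

namespace Matrix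

variable {R : Type*} [CommRing R] {n ι : Type*} [Fintype n] [Fintype ι] [DecidableEq ι]

theorem det_transpose_mul_eq_sum (X Y : Matrix n ι R) :
    (Xᵀ * Y).det = ∑ p : ι → n, (∏ i, Y (p i) i) * (X.submatrix p id).det := by
  simp only [det_apply' (Xᵀ * Y), transpose_apply, mul_apply, Finset.prod_univ_sum,
    Fintype.piFinset_univ, Finset.mul_sum]
  rw [Finset.sum_comm]
  refine Finset.sum_congr rfl fun p _ => ?_
  rw [← det_transpose, det_apply', Finset.mul_sum]
  refine Finset.sum_congr rfl fun σ _ => ?_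
  simp only [Finset.prod_mul_distrib, transpose_apply, submatrix_apply, id]
  ring

theorem factorial_mul_det_transpose_mul (X Y : Matrix n ι R) :
    ((Fintype.card ι).factorial : R) * (Xᵀ * Y).det =
      ∑ p : ι → n, (X.submatrix p id).det * (Y.submatrix p id).det := by
  have reindex (τ : Equiv.Perm ι) : (Xᵀ * Y).det =
      ∑ p : ι → n, (X.submatrix p id).det * ((τ.sign : R) * ∏ i, Y (p (τ i)) i) := by
    rw [det_transpose_mul_eq_sum, ← (Equiv.arrowCongr τ.symm (Equiv.refl n)).sum_comp]
    refine Finset.sum_congr rfl fun p _ => ?_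
    rw [show X.submatrix (Equiv.arrowCongr τ.symm (Equiv.refl n) p) id =
      (X.submatrix p id).submatrix τ id from rfl, det_permute]
    change (∏ i, Y (p (τ i)) i) * _ = _
    ring
  calc ((Fintype.card ι).factorial : R) * (Xᵀ * Y).det
      = ∑ τ : Equiv.Perm ι, (Xᵀ * Y).det := by simp [Fintype.card_perm]
    _ = ∑ p : ι → n, (X.submatrix p id).det *
          ∑ τ : Equiv.Perm ι, (τ.sign : R) * ∏ i, Y (p (τ i)) i := by
      rw [Finset.sum_congr rfl fun τ _ => reindex τ, Finset.sum_comm]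
      simp only [Finset.mul_sum]
    _ = _ := by simp [det_apply']

variable {𝕜 : Type*} [RCLike 𝕜]

theorem factorial_mul_det_conjTranspose_mul (X Y : Matrix n ι 𝕜) :
    ((Fintype.card ι).factorial : 𝕜) * (Xᴴ * Y).det =
      ∑ p : ι → n, star (X.submatrix p id).det * (Y.submatrix p id).det := by
  rw [show Xᴴ = (X.map star)ᵀ from rfl, factorial_mul_det_transpose_mul]
  refine Finset.sum_congr rfl fun p _ => ?_
  rw [← det_conjTranspose, ← det_transpose]
  rfl

theorem norm_det_conjTranspose_mul_sq_le (X Y : Matrix n ι 𝕜) :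
    ‖(Xᴴ * Y).det‖ ^ 2 ≤ ‖(Xᴴ * X).det‖ * ‖(Yᴴ * Y).det‖ := by
  set c : ℝ := ((Fintype.card ι).factorial : ℝ)
  have hc : 0 < c := by positivity
  have scale (X Y : Matrix n ι 𝕜) : c * ‖(Xᴴ * Y).det‖ =
      ‖∑ p : ι → n, star (X.submatrix p id).det * (Y.submatrix p id).det‖ := by
    rw [← factorial_mul_det_conjTranspose_mul, norm_mul, RCLike.norm_natCast]
  have gram (X : Matrix n ι 𝕜) :
      c * ‖(Xᴴ * X).det‖ = ∑ p : ι → n, ‖(X.submatrix p id).det‖ ^ 2 := by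
    rw [scale]
    simp_rw [RCLike.star_def, RCLike.conj_mul]
    norm_cast
    exact abs_of_nonneg (by positivity)
  have cross : c * ‖(Xᴴ * Y).det‖ ≤
      ∑ p : ι → n, ‖(X.submatrix p id).det‖ * ‖(Y.submatrix p id).det‖ := by
    rw [scale]
    refine (norm_sum_le _ _).trans_eq (Finset.sum_congr rfl fun p _ => ?_)
    rw [norm_mul, norm_star]
  refine le_of_mul_le_mul_left ?_ (pow_pos hc 2)
  calc c ^ 2 * ‖(Xᴴ * Y).det‖ ^ 2 = (c * ‖(Xᴴ * Y).det‖) ^ 2 := by ring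
    _ ≤ (∑ p : ι → n, ‖(X.submatrix p id).det‖ * ‖(Y.submatrix p id).det‖) ^ 2 :=
      pow_le_pow_left₀ (by positivity) cross 2
    _ ≤ (c * ‖(Xᴴ * X).det‖) * (c * ‖(Yᴴ * Y).det‖) := by
      rw [gram, gram]
      exact Finset.sum_mul_sq_le_sq_mul_sq _ _ _
    _ = c ^ 2 * (‖(Xᴴ * X).det‖ * ‖(Yᴴ * Y).det‖) := by ring

open scoped MatrixOrder in
theorem PosSemidef.norm_det_submatrix_sq_le [DecidableEq n] {A : Matrix n n 𝕜}
    (hA : A.PosSemidef) (f g : ι → n) :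
    ‖(A.submatrix f g).det‖ ^ 2 ≤ ‖(A.submatrix f f).det‖ * ‖(A.submatrix g g).det‖ := by
  obtain ⟨B, rfl⟩ := CStarAlgebra.nonneg_iff_eq_star_mul_self.mp hA.nonneg
  have gram (f g : ι → n) :
      (star B * B).submatrix f g = (B.submatrix id f)ᴴ * B.submatrix id g := by
    ext i j
    simp [mul_apply]
  simpa only [gram] using norm_det_conjTranspose_mul_sq_le (B.submatrix id f) (B.submatrix id g)

end Matrix

theorem max_abs_det_eq_max_principal_general {m k : ℕ} (hkm : k ≤ m)
    (A : Matrix (Fin m) (Fin m) ℂ) (hA : A.PosSemidef) :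
    ∃ Istar : Fin k ↪ Fin m,
      (∀ f g : Fin k ↪ Fin m,
        ‖(A.submatrix f g).det‖ ≤ ‖(A.submatrix Istar Istar).det‖) ∧
      (A.submatrix Istar Istar).det = (‖(A.submatrix Istar Istar).det‖ : ℂ) := by
  obtain ⟨Istar, -, hmax⟩ := Finset.univ.exists_max_image
    (fun f : Fin k ↪ Fin m => ‖(A.submatrix f f).det‖) ⟨Fin.castLEEmb hkm, Finset.mem_univ _⟩
  refine ⟨Istar, fun f g => ?_, Complex.eq_coe_norm_of_nonneg (hA.submatrix Istar).det_nonneg⟩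
  rw [← pow_le_pow_iff_left₀ (norm_nonneg _) (norm_nonneg _) two_ne_zero]
  calc ‖(A.submatrix f g).det‖ ^ 2
      ≤ ‖(A.submatrix f f).det‖ * ‖(A.submatrix g g).det‖ := hA.norm_det_submatrix_sq_le f g
    _ ≤ ‖(A.submatrix Istar Istar).det‖ ^ 2 := by
      rw [sq]
      exact mul_le_mul (hmax f (Finset.mem_univ _)) (hmax g (Finset.mem_univ _))
        (norm_nonneg _) (norm_nonneg _)

/-- For a positive semidefinite Hermitian `A`, the maximum of `|det A[I,J]|`
over all pairs of `k`-element index sets `I, J` is attained with `I = J`: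
there is a `k`-element index set `Istar` (encoded as an embedding
`Fin k ↪ Fin m`) such that `|det A[I,J]| ≤ |det A[Istar]|` for all `k`-element
`I, J`, and `det A[Istar]` is a nonnegative real, so that
`max_{|I|=|J|=k} |det A[I,J]| = max_{|I|=k} det A[I]`. -/
theorem max_abs_det_eq_max_principal {m k : ℕ} (hk1 : 1 ≤ k) (hkm : k ≤ m)
    (A : Matrix (Fin m) (Fin m) ℂ) (hA : A.PosSemidef) :
    ∃ Istar : Fin k ↪ Fin m,
      (∀ f g : Fin k ↪ Fin m,
        ‖(A.submatrix f g).det‖ ≤ ‖(A.submatrix Istar Istar).det‖) ∧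
      (A.submatrix Istar Istar).det = (‖(A.submatrix Istar Istar).det‖ : ℂ) :=
  max_abs_det_eq_max_principal_general hkm A hA
end

section
/- Let f be a real continuous function on an interval E that is the primitive of an operator monotone function on the interior of E. Then for each fixed subset I of {1,...,m}, the map A ↦ tr f(A[I]) is convex on the set of m×m Hermitian matrices whose spectra lie in E. -/
/-! Operator monotonicity of `g`, tested on `1 × 1` matrices, makes `g` monotone, so its primitive
`f` is convex. For convex `f`, `tr f` is convex on Hermitian matrices with spectrum in `E`: write
the eigenvalues of `C = a A + b B` as Rayleigh quotients `⟨uᵢ, C uᵢ⟩` in an eigenbasis `u` of `C`;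
convexity of `f` bounds `tr f(C)` by `a ∑ f ⟨uᵢ, A uᵢ⟩ + b ∑ f ⟨uᵢ, B uᵢ⟩`, and each of these
sums is at most `tr f(A)` resp. `tr f(B)` (Peierls), because in the eigenbasis of `A` the
weights `|⟨vⱼ, uᵢ⟩|²` form a doubly stochastic matrix. Compression `A ↦ A[I]` is linear, and it
maps matrices with spectrum in the interval `E` to such matrices because Rayleigh quotients of
`A[I]` are Rayleigh quotients of `A`. -/

open Matrix
open scoped ComplexOrder

/-- `f(M)` for a Hermitian matrix `M`, defined by the spectral decomposition
(junk value `0` if `M` is not Hermitian). -/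
noncomputable def matF {n : Type*} [Fintype n] [DecidableEq n]
    (f : ℝ → ℝ) (M : Matrix n n ℂ) : Matrix n n ℂ :=
  if h : M.IsHermitian then
    (h.eigenvectorUnitary : Matrix n n ℂ) *
      Matrix.diagonal (fun i => (f (h.eigenvalues i) : ℂ)) *
      (star (h.eigenvectorUnitary : Matrix n n ℂ))
  else 0

namespace OrthonormalBasis

open RCLike

variable {𝕜 F ι κ : Type*} [RCLike 𝕜] [NormedAddCommGroup F] [InnerProductSpace 𝕜 F]
  [Fintype ι] [Fintype κ] {T : F →ₗ[𝕜] F} (b : OrthonormalBasis ι 𝕜 F) {μ : ι → ℝ}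

theorem re_inner_map_self_eq_sum (hb : ∀ j, T (b j) = (μ j : 𝕜) • b j) (x : F) :
    re (inner 𝕜 x (T x)) = ∑ j, ‖inner 𝕜 (b j) x‖ ^ 2 * μ j := by
  have hTx : T x = ∑ j, (inner 𝕜 (b j) x * μ j) • b j := by
    conv_lhs => rw [← b.sum_repr' x]
    simp only [map_sum, map_smul, hb, smul_smul]
  rw [hTx, inner_sum, map_sum]
  refine Finset.sum_congr rfl fun j _ => ?_
  rw [inner_smul_right, ← inner_conj_symm, mul_right_comm, RCLike.conj_mul, RCLike.norm_conj,
    ← RCLike.ofReal_pow, ← RCLike.ofReal_mul, RCLike.ofReal_re]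

theorem re_inner_map_self_mem {s : Set ℝ} (hs : Convex ℝ s)
    (hb : ∀ j, T (b j) = (μ j : 𝕜) • b j) (hμ : ∀ j, μ j ∈ s) {x : F} (hx : ‖x‖ = 1) :
    re (inner 𝕜 x (T x)) ∈ s := by
  rw [b.re_inner_map_self_eq_sum hb]
  refine hs.sum_mem (fun j _ => by positivity) ?_ (fun j _ => hμ j)
  rw [b.sum_sq_norm_inner_right, hx, one_pow]

theorem sum_re_inner_map_self_le_of_convexOn {s : Set ℝ} {f : ℝ → ℝ} (hf : ConvexOn ℝ s f)
    (hb : ∀ j, T (b j) = (μ j : 𝕜) • b j) (hμ : ∀ j, μ j ∈ s) (u : OrthonormalBasis κ 𝕜 F) :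
    ∑ i, f (re (inner 𝕜 (u i) (T (u i)))) ≤ ∑ j, f (μ j) :=
  calc ∑ i, f (re (inner 𝕜 (u i) (T (u i))))
      = ∑ i, f (∑ j, ‖inner 𝕜 (b j) (u i)‖ ^ 2 • μ j) := by
        simp only [b.re_inner_map_self_eq_sum hb, smul_eq_mul]
    _ ≤ ∑ i, ∑ j, ‖inner 𝕜 (b j) (u i)‖ ^ 2 • f (μ j) := by
        gcongr with i
        refine hf.map_sum_le (fun j _ => by positivity) ?_ (fun j _ => hμ j)
        rw [b.sum_sq_norm_inner_right, u.norm_eq_one, one_pow]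
    _ = ∑ j, f (μ j) := by
        rw [Finset.sum_comm]
        refine Finset.sum_congr rfl fun j _ => ?_
        rw [← Finset.sum_smul, u.sum_sq_norm_inner_left, b.norm_eq_one, one_pow, one_smul]

end OrthonormalBasis

namespace Matrix

open RCLike

def submatrixLinearMap (R : Type*) {l m n o α : Type*} [Semiring R] [AddCommMonoid α]
    [Module R α] (r : l → m) (c : o → n) : Matrix m n α →ₗ[R] Matrix l o α where
  toFun A := A.submatrix r c
  map_add' _ _ := rfl
  map_smul' _ _ := rfl

def hermitianWithSpectrumIn (n 𝕜 : Type*) [Fintype n] [DecidableEq n] [RCLike 𝕜]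
    (s : Set ℝ) : Set (Matrix n n 𝕜) :=
  {A | ∃ h : A.IsHermitian, ∀ i, h.eigenvalues i ∈ s}

variable {𝕜 n k κ : Type*} [RCLike 𝕜]

theorem IsHermitian.smul_add_smul {A B : Matrix n n 𝕜} (hA : A.IsHermitian)
    (hB : B.IsHermitian) (a b : ℝ) : (a • A + b • B).IsHermitian :=
  (hA.smul (IsSelfAdjoint.all a)).add (hB.smul (IsSelfAdjoint.all b))

theorem submatrix_eq_conjTranspose_mul_mul [Fintype n] [DecidableEq n] (A : Matrix n n 𝕜)
    (e : k → n) :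
    A.submatrix e e =
      ((1 : Matrix n n 𝕜).submatrix id e)ᴴ * A * (1 : Matrix n n 𝕜).submatrix id e := by
  ext i j
  simp [mul_apply, one_apply]

variable [Fintype n] [Fintype k] [Fintype κ]

theorem re_star_dotProduct_smul_add_smul_mulVec (a b : ℝ) (A B : Matrix n n 𝕜) (x : n → 𝕜) :
    re (star x ⬝ᵥ (a • A + b • B) *ᵥ x) =
      a * re (star x ⬝ᵥ A *ᵥ x) + b * re (star x ⬝ᵥ B *ᵥ x) := by
  simp only [add_mulVec, smul_mulVec, dotProduct_add, dotProduct_smul, map_add, RCLike.smul_re]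

theorem star_dotProduct_conjTranspose_mul_mul_mulVec (A : Matrix n n 𝕜) (P : Matrix n k 𝕜)
    (v : k → 𝕜) : star v ⬝ᵥ (Pᴴ * A * P) *ᵥ v = star (P *ᵥ v) ⬝ᵥ A *ᵥ (P *ᵥ v) := by
  simp only [← mulVec_mulVec, star_mulVec, dotProduct_mulVec, vecMul_vecMul]

variable [DecidableEq n] [DecidableEq k]

theorem inner_toEuclideanLin_self (A : Matrix n n 𝕜) (x : EuclideanSpace 𝕜 n) :
    inner 𝕜 x (toEuclideanLin A x) = star ⇑x ⬝ᵥ A *ᵥ ⇑x := by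
  rw [EuclideanSpace.inner_eq_star_dotProduct, dotProduct_comm]
  rfl

theorem norm_toLp_mulVec_of_conjTranspose_mul_self {P : Matrix n k 𝕜} (hP : Pᴴ * P = 1)
    (v : EuclideanSpace 𝕜 k) : ‖(WithLp.toLp 2 (P *ᵥ ⇑v) : EuclideanSpace 𝕜 n)‖ = ‖v‖ := by
  have h := star_dotProduct_conjTranspose_mul_mul_mulVec 1 P v
  rw [Matrix.mul_one, hP, one_mulVec, one_mulVec] at h
  rw [← sq_eq_sq₀ (norm_nonneg _) (norm_nonneg _), ← inner_self_eq_norm_sq (𝕜 := 𝕜),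
    ← inner_self_eq_norm_sq (𝕜 := 𝕜), EuclideanSpace.inner_eq_star_dotProduct,
    EuclideanSpace.inner_eq_star_dotProduct, dotProduct_comm, dotProduct_comm v.ofLp]
  exact congrArg re h.symm

theorem IsHermitian.toEuclideanLin_eigenvectorBasis {A : Matrix n n 𝕜} (hA : A.IsHermitian)
    (j : n) : toEuclideanLin A (hA.eigenvectorBasis j) =
      (hA.eigenvalues j : 𝕜) • hA.eigenvectorBasis j := by
  rw [toLpLin_apply, hA.mulVec_eigenvectorBasis, ← RCLike.real_smul_eq_coe_smul (K := 𝕜)]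
  rfl

theorem IsHermitian.re_dotProduct_mulVec_mem {s : Set ℝ} (hs : Convex ℝ s) {A : Matrix n n 𝕜}
    (hA : A.IsHermitian) (hAs : ∀ i, hA.eigenvalues i ∈ s) {x : EuclideanSpace 𝕜 n}
    (hx : ‖x‖ = 1) : re (star ⇑x ⬝ᵥ A *ᵥ ⇑x) ∈ s := by
  rw [← inner_toEuclideanLin_self]
  exact hA.eigenvectorBasis.re_inner_map_self_mem hs hA.toEuclideanLin_eigenvectorBasis hAs hx

theorem IsHermitian.sum_re_dotProduct_mulVec_le_of_convexOn {s : Set ℝ} {f : ℝ → ℝ}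
    (hf : ConvexOn ℝ s f) {A : Matrix n n 𝕜} (hA : A.IsHermitian)
    (hAs : ∀ i, hA.eigenvalues i ∈ s) (u : OrthonormalBasis κ 𝕜 (EuclideanSpace 𝕜 n)) :
    ∑ i, f (re (star ⇑(u i) ⬝ᵥ A *ᵥ ⇑(u i))) ≤ ∑ j, f (hA.eigenvalues j) := by
  simp only [← inner_toEuclideanLin_self]
  exact hA.eigenvectorBasis.sum_re_inner_map_self_le_of_convexOn hf
    hA.toEuclideanLin_eigenvectorBasis hAs u

theorem IsHermitian.eigenvalues_mem_of_eq_conjTranspose_mul_mul {s : Set ℝ}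
    (hs : Convex ℝ s) {A : Matrix n n 𝕜} (hA : A.IsHermitian)
    (hAs : ∀ i, hA.eigenvalues i ∈ s) {P : Matrix n k 𝕜} (hP : Pᴴ * P = 1)
    {B : Matrix k k 𝕜} (hB : B.IsHermitian) (hBA : B = Pᴴ * A * P) (i : k) :
    hB.eigenvalues i ∈ s := by
  have hv := hB.eigenvectorBasis.norm_eq_one i
  rw [hB.eigenvalues_eq]
  generalize hB.eigenvectorBasis i = v at hv ⊢
  rw [hBA, star_dotProduct_conjTranspose_mul_mul_mulVec]
  refine hA.re_dotProduct_mulVec_mem hs hAs (x := WithLp.toLp 2 (P *ᵥ v)) ?_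
  rw [norm_toLp_mulVec_of_conjTranspose_mul_self hP, hv]

theorem IsHermitian.eigenvalues_submatrix_mem {s : Set ℝ} (hs : Convex ℝ s)
    {A : Matrix n n 𝕜} (hA : A.IsHermitian) (hAs : ∀ i, hA.eigenvalues i ∈ s) {e : k → n}
    (he : Function.Injective e) (hAe : (A.submatrix e e).IsHermitian) (i : k) :
    hAe.eigenvalues i ∈ s :=
  hA.eigenvalues_mem_of_eq_conjTranspose_mul_mul hs hAs
    (by rw [← submatrix_one (α := 𝕜) e he, submatrix_eq_conjTranspose_mul_mul, Matrix.mul_one])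
    hAe (submatrix_eq_conjTranspose_mul_mul A e) i

theorem convex_hermitianWithSpectrumIn {s : Set ℝ} (hs : Convex ℝ s) :
    Convex ℝ (hermitianWithSpectrumIn n 𝕜 s) := by
  rintro A ⟨hA, hAs⟩ B ⟨hB, hBs⟩ a b ha hb hab
  have hC := hA.smul_add_smul hB a b
  refine ⟨hC, fun i => ?_⟩
  rw [hC.eigenvalues_eq, re_star_dotProduct_smul_add_smul_mulVec]
  have hu := hC.eigenvectorBasis.norm_eq_one i
  exact hs (hA.re_dotProduct_mulVec_mem hs hAs hu) (hB.re_dotProduct_mulVec_mem hs hBs hu)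
    ha hb hab

theorem IsHermitian.eigenvalues_fin_one {M : Matrix (Fin 1) (Fin 1) ℂ} (hM : M.IsHermitian)
    (i : Fin 1) : (hM.eigenvalues i : ℂ) = M i i := by
  simpa [trace, Fin.eq_zero i] using hM.trace_eq_sum_eigenvalues.symm

end Matrix

section TraceFunction

variable {n : Type*} [Fintype n] [DecidableEq n]

theorem trF_of_isHermitian (f : ℝ → ℝ) {M : Matrix n n ℂ} (hM : M.IsHermitian) :
    trF f M = ∑ i, f (hM.eigenvalues i) :=
  dif_pos hM

theorem trace_matF (f : ℝ → ℝ) {M : Matrix n n ℂ} (hM : M.IsHermitian) :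
    (matF f M).trace = ∑ i, (f (hM.eigenvalues i) : ℂ) := by
  rw [matF, dif_pos hM, trace_mul_cycle, Unitary.coe_star_mul_self, Matrix.one_mul,
    trace_diagonal]

theorem convexOn_trF {s : Set ℝ} {f : ℝ → ℝ} (hs : Convex ℝ s) (hf : ConvexOn ℝ s f) :
    ConvexOn ℝ (hermitianWithSpectrumIn n ℂ s) (trF f) := by
  refine ⟨convex_hermitianWithSpectrumIn hs, ?_⟩
  rintro A ⟨hA, hAs⟩ B ⟨hB, hBs⟩ a b ha hb hab
  have hC := hA.smul_add_smul hB a b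
  set u := hC.eigenvectorBasis
  let qA i := RCLike.re (star ⇑(u i) ⬝ᵥ A *ᵥ ⇑(u i))
  let qB i := RCLike.re (star ⇑(u i) ⬝ᵥ B *ᵥ ⇑(u i))
  calc trF f (a • A + b • B) = ∑ i, f (a * qA i + b * qB i) := by
        simp only [trF_of_isHermitian f hC, hC.eigenvalues_eq,
          re_star_dotProduct_smul_add_smul_mulVec, qA, qB, u]
    _ ≤ ∑ i, (a * f (qA i) + b * f (qB i)) := by
        gcongr with i
        exact hf.2 (hA.re_dotProduct_mulVec_mem hs hAs (u.norm_eq_one i))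
          (hB.re_dotProduct_mulVec_mem hs hBs (u.norm_eq_one i)) ha hb hab
    _ = a * ∑ i, f (qA i) + b * ∑ i, f (qB i) := by
        rw [Finset.sum_add_distrib, Finset.mul_sum, Finset.mul_sum]
    _ ≤ a * trF f A + b * trF f B := by
        rw [trF_of_isHermitian f hA, trF_of_isHermitian f hB]
        exact add_le_add
          (mul_le_mul_of_nonneg_left (hA.sum_re_dotProduct_mulVec_le_of_convexOn hf hAs u) ha)
          (mul_le_mul_of_nonneg_left (hB.sum_re_dotProduct_mulVec_le_of_convexOn hf hBs u) hb)

end TraceFunction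

theorem matF_fin_one (f : ℝ → ℝ) {M : Matrix (Fin 1) (Fin 1) ℂ} (hM : M.IsHermitian)
    (i : Fin 1) : matF f M i i = f (hM.eigenvalues i) := by
  simpa [trace, Fin.eq_zero i] using trace_matF f hM

theorem monotoneOn_of_matF_sub_posSemidef {U : Set ℝ} {g : ℝ → ℝ}
    (hg : ∀ (X Y : Matrix (Fin 1) (Fin 1) ℂ) (hX : X.IsHermitian) (hY : Y.IsHermitian),
      (∀ i, hX.eigenvalues i ∈ U) → (∀ i, hY.eigenvalues i ∈ U) →
      (Y - X).PosSemidef → (matF g Y - matF g X).PosSemidef) :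
    MonotoneOn g U := by
  intro x hx y hy hxy
  let d : ℝ → Matrix (Fin 1) (Fin 1) ℂ := fun t => diagonal fun _ => (t : ℂ)
  have hd : ∀ t, (d t).IsHermitian := fun t =>
    isHermitian_diagonal_of_self_adjoint _ (by ext; simp)
  have hd_eig : ∀ t i, (hd t).eigenvalues i = t := fun t i => by
    simpa [d] using (hd t).eigenvalues_fin_one i
  have hdyx : (d y - d x).PosSemidef := by
    rw [diagonal_sub]
    exact PosSemidef.diagonal fun _ => by simpa using hxy
  have hpsd := hg (d x) (d y) (hd x) (hd y)
    (fun i => by rw [hd_eig]; exact hx) (fun i => by rw [hd_eig]; exact hy) hdyx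
  have h00 := hpsd.diag_nonneg (i := 0)
  rw [Matrix.sub_apply, matF_fin_one g (hd x), matF_fin_one g (hd y), hd_eig, hd_eig] at h00
  exact_mod_cast sub_nonneg.mp h00

theorem MonotoneOn.convexOn_of_hasDerivAt {D : Set ℝ} {f g : ℝ → ℝ}
    (hg : MonotoneOn g (interior D)) (hD : Convex ℝ D) (hf : ContinuousOn f D)
    (hfg : ∀ x ∈ interior D, HasDerivAt f (g x) x) : ConvexOn ℝ D f :=
  hg.congr (fun x hx => (hfg x hx).deriv.symm) |>.convexOn_of_deriv hD hf
    fun x hx => (hfg x hx).differentiableAt.differentiableWithinAt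

/-- Let `f` be continuous on an interval `E` and a primitive of a function `g`
that is operator monotone on the interior of `E` (i.e. `X ⪯ Y` implies
`g(X) ⪯ g(Y)` for Hermitian matrices of any size with spectra in the interior
of `E`).  Then for each fixed `I`, the map `A ↦ tr f(A[I])` is convex on the
(convex) set of Hermitian matrices with spectrum in `E`. -/
theorem trace_primitive_opMonotone_convexOn {m : ℕ}
    (E : Set ℝ) (hE : E.OrdConnected) (f g : ℝ → ℝ)
    (hf : ContinuousOn f E)
    (hfg : ∀ x ∈ interior E, HasDerivAt f (g x) x)
    (hg : ∀ (n : ℕ) (X Y : Matrix (Fin n) (Fin n) ℂ) (hX : X.IsHermitian)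
      (hY : Y.IsHermitian), (∀ i, hX.eigenvalues i ∈ interior E) →
      (∀ i, hY.eigenvalues i ∈ interior E) →
      (Y - X).PosSemidef → (matF g Y - matF g X).PosSemidef)
    (I : Finset (Fin m)) :
    ConvexOn ℝ {A : Matrix (Fin m) (Fin m) ℂ | ∃ h : A.IsHermitian, ∀ i, h.eigenvalues i ∈ E}
      (fun A => trF f (psub A I)) := by
  have hEc : Convex ℝ E := hE.convex
  have hfE : ConvexOn ℝ E f :=
    (monotoneOn_of_matF_sub_posSemidef (hg 1)).convexOn_of_hasDerivAt hEc hf hfg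
  refine ((convexOn_trF hEc hfE).comp_linearMap
    (submatrixLinearMap ℝ Subtype.val Subtype.val)).subset ?_ (convex_hermitianWithSpectrumIn hEc)
  rintro A ⟨hA, hAE⟩
  exact ⟨hA.submatrix _, hA.eigenvalues_submatrix_mem hEc hAE Subtype.val_injective _⟩
end
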